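/- arXiv:2308.00170 — 15 statements merged into one kernel-verified Lean document; each statement's English description precedes it below -/
import Mathlib

section
/- Let c be a proper vertex coloring of a graph G, let u be a vertex, and let i be a color not appearing in the closed neighborhood of u. If v is a vertex adjacent to u such that every color appears an even number of times among the neighbors of v under c, then after recoloring u with color i, some color appears an odd number of times among the neighbors of v. In other words, U(c) ∩ U(c_u^i) ∩ N(u) = ∅, where U(d) denotes the set of vertices having no color appearing an odd number of times in their neighborhood under coloring d. -/
/-- The number of neighbors of `v` colored `t`. -/
noncomputable def nbrColorCount {V : Type*} {α : Type*} (G : SimpleGraph V) (c : V → α) (v : V) (t : α) : ℕ :=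
  Nat.card {x // G.Adj v x ∧ c x = t}

/-- The set of witnesses of `v`: colors appearing an odd number of times among neighbors of `v`. -/
def witnessSet {V : Type*} {α : Type*} (G : SimpleGraph V) (c : V → α) (v : V) : Set α :=
  {t | Odd (nbrColorCount G c v t)}

/-- A proper coloring. -/
def properColoring {V : Type*} {α : Type*} (G : SimpleGraph V) (c : V → α) : Prop :=
  ∀ ⦃u v⦄, G.Adj u v → c u ≠ c v

theorem stmt_0 {V : Type*} [Fintype V] [DecidableEq V] (G : SimpleGraph V)
    (c : V → ℕ) (hc : properColoring G c) (u : V) (i : ℕ)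
    (hiu : i ≠ c u) (hiN : ∀ x, G.Adj u x → c x ≠ i)
    (v : V) (hadj : G.Adj u v)
    (hv : witnessSet G c v = ∅) :
    witnessSet G (Function.update c u i) v ≠ ∅ := by
  classical
  intro hemp
  have hi_even : ¬ Odd (nbrColorCount G c v i) := by
    intro h
    have : i ∈ witnessSet G c v := h
    rw [hv] at this; exact this
  have hkey : nbrColorCount G (Function.update c u i) v i
      = nbrColorCount G c v i + 1 := by
    unfold nbrColorCount
    rw [Nat.card_eq_fintype_card, Nat.card_eq_fintype_card,
      Fintype.card_subtype, Fintype.card_subtype]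
    have hset : (Finset.univ.filter fun x => G.Adj v x ∧ Function.update c u i x = i)
        = insert u (Finset.univ.filter fun x => G.Adj v x ∧ c x = i) := by
      ext x
      simp only [Finset.mem_filter, Finset.mem_insert, Finset.mem_univ, true_and]
      by_cases hx : x = u
      · subst hx
        simp [Function.update_self, hadj.symm]
      · simp [Function.update_of_ne hx, hx]
    rw [hset, Finset.card_insert_of_notMem]
    simp [Ne.symm hiu]
  have hodd : Odd (nbrColorCount G (Function.update c u i) v i) := by
    rw [hkey]
    exact Even.add_one (Nat.not_odd_iff_even.mp hi_even)
  have : i ∈ witnessSet G (Function.update c u i) v := hodd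
  rw [hemp] at this; exact this
end

section
/- Let c be a proper vertex coloring of a graph G and let w be a c-critical vertex, i.e., w has two non-adjacent neighbors w1, w2 with distinct colors such that the set of colors appearing an odd number of times among the neighbors of w is exactly {c(w1), c(w2)}. Then the number of distinct colors appearing on the closed neighborhood of w is at most d(w)/2 + 2, where d(w) is the degree of w. -/
/-- A vertex `w` is `c`-critical. -/
def isCritical {V : Type*} {α : Type*} (G : SimpleGraph V) (c : V → α) (w : V) : Prop :=
  ∃ w1 w2, G.Adj w w1 ∧ G.Adj w w2 ∧ ¬ G.Adj w1 w2 ∧ c w1 ≠ c w2 ∧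
    witnessSet G c w = {c w1, c w2}

theorem stmt_1 {V : Type*} [Fintype V] [DecidableEq V] (G : SimpleGraph V)
    [DecidableRel G.Adj] (c : V → ℕ) (hc : properColoring G c)
    (w : V) (hw : isCritical G c w) :
    (c '' (insert w {x | G.Adj w x})).ncard ≤ G.degree w / 2 + 2 := by
  classical
  obtain ⟨w1, w2, h1, h2, hna, hne, hws⟩ := hw
  set N := G.neighborFinset w with hN
  have hdeg : G.degree w = N.card := rfl
  have hset : (insert w {x | G.Adj w x} : Set V) = ↑(insert w N) := by
    ext x; simp [hN]
  rw [hset, ← Finset.coe_image, Set.ncard_coe_finset]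
  set K := N.image c with hK
  have hcount : ∀ t, nbrColorCount G c w t = (N.filter (fun x => c x = t)).card := by
    intro t
    rw [nbrColorCount, Nat.card_eq_fintype_card, Fintype.card_subtype]
    congr 1
    ext x
    simp [hN]
  have hpos : ∀ t ∈ K, 1 ≤ (N.filter (fun x => c x = t)).card := by
    intro t ht
    obtain ⟨x, hx, hcx⟩ := Finset.mem_image.mp ht
    exact Finset.card_pos.mpr ⟨x, Finset.mem_filter.mpr ⟨hx, hcx⟩⟩
  set S : Finset ℕ := {c w1, c w2} with hS
  have hScard : S.card = 2 := by
    rw [hS, Finset.card_insert_of_notMem (by simpa using hne), Finset.card_singleton]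
  have hSK : S ⊆ K := by
    intro t ht
    rw [hS] at ht
    rcases Finset.mem_insert.mp ht with h | h
    · subst h; exact Finset.mem_image_of_mem c (by simp [hN, h1])
    · rw [Finset.mem_singleton] at h; subst h
      exact Finset.mem_image_of_mem c (by simp [hN, h2])
  have h2le : ∀ t ∈ K \ S, 2 ≤ (N.filter (fun x => c x = t)).card := by
    intro t ht
    obtain ⟨htK, htS⟩ := Finset.mem_sdiff.mp ht
    have hnot : ¬ Odd (nbrColorCount G c w t) := by
      intro hodd
      have : t ∈ witnessSet G c w := hodd
      rw [hws] at this
      simp only [Set.mem_insert_iff, Set.mem_singleton_iff] at this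
      rcases this with h | h
      · exact htS (by rw [hS]; simp [h])
      · exact htS (by rw [hS]; simp [h])
    rw [hcount] at hnot
    have he : Even (N.filter (fun x => c x = t)).card := Nat.not_odd_iff_even.mp hnot
    have hp := hpos t htK
    obtain ⟨m, hm⟩ := he
    omega
  have hsum : N.card = ∑ t ∈ K, (N.filter (fun x => c x = t)).card :=
    Finset.card_eq_sum_card_image c N
  have hsplit : ∑ t ∈ K \ S, (N.filter (fun x => c x = t)).card
      + ∑ t ∈ S, (N.filter (fun x => c x = t)).card
      = ∑ t ∈ K, (N.filter (fun x => c x = t)).card :=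
    Finset.sum_sdiff hSK
  have hlow1 : 2 * (K \ S).card ≤ ∑ t ∈ K \ S, (N.filter (fun x => c x = t)).card := by
    calc 2 * (K \ S).card = ∑ _t ∈ K \ S, 2 := by rw [Finset.sum_const]; ring
    _ ≤ _ := Finset.sum_le_sum h2le
  have hlow2 : 2 ≤ ∑ t ∈ S, (N.filter (fun x => c x = t)).card := by
    calc 2 = ∑ _t ∈ S, 1 := by rw [Finset.sum_const, hScard]; ring
    _ ≤ _ := Finset.sum_le_sum (fun t ht => hpos t (hSK ht))
  have hKS : (K \ S).card = K.card - 2 := by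
    rw [Finset.card_sdiff_of_subset hSK, hScard]
  have hKge : 2 ≤ K.card := hScard ▸ Finset.card_le_card hSK
  have hKf : K.card = (Finset.image c N).card := rfl
  have hKbound : K.card ≤ N.card / 2 + 1 := by omega
  have hfinal : ((insert w N).image c).card ≤ K.card + 1 := by
    rw [Finset.image_insert]
    exact le_trans (Finset.card_insert_le _ _) (by omega)
  have hKK : K.card = (Finset.image c N).card := rfl
  calc ((insert w N).image c).card ≤ K.card + 1 := hfinal
    _ ≤ N.card / 2 + 2 := by omega
    _ = G.degree w / 2 + 2 := by rw [hdeg]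
end

section
/- Let c be a proper vertex coloring of a graph G, let u be a vertex, and let i be a color not in c(N[u]). Let c_u^i be the coloring obtained by recoloring u with i. Then a vertex w belongs to U(c_u^i) \ U(c) if and only if w is a neighbor of u and the set of colors appearing an odd number of times among the neighbors of w under c is exactly {c(u), i}. (Here U(d) is the set of vertices with no color appearing an odd number of times in their neighborhood under d.) -/
theorem stmt_2 {V : Type*} [Fintype V] [DecidableEq V] (G : SimpleGraph V)
    (c : V → ℕ) (hc : properColoring G c) (u : V) (i : ℕ)
    (hiu : i ≠ c u) (hiN : ∀ x, G.Adj u x → c x ≠ i) (w : V) :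
    (witnessSet G (Function.update c u i) w = ∅ ∧ witnessSet G c w ≠ ∅) ↔
      (G.Adj u w ∧ witnessSet G c w = {c u, i}) := by
  classical
  have key : ∀ (d : V → ℕ) (v : V) (t : ℕ),
      nbrColorCount G d v t = (Finset.univ.filter (fun x => G.Adj v x ∧ d x = t)).card := by
    intro d v t
    rw [nbrColorCount, Nat.card_eq_fintype_card]
    convert Fintype.card_subtype _
  by_cases hadj : G.Adj u w
  · have hwu : G.Adj w u := hadj.symm
    have flip : ∀ t, Odd (nbrColorCount G (Function.update c u i) w t) ↔
        ((t = c u ∨ t = i) ↔ ¬ Odd (nbrColorCount G c w t)) := by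
      intro t
      rw [key, key]
      by_cases h1 : t = c u
      · subst h1
        have hmem : u ∈ Finset.univ.filter (fun x => G.Adj w x ∧ c x = c u) := by
          simp [hwu]
        have hset : Finset.univ.filter (fun x => G.Adj w x ∧ Function.update c u i x = c u)
            = (Finset.univ.filter (fun x => G.Adj w x ∧ c x = c u)).erase u := by
          ext x
          by_cases hx : x = u
          · subst hx; simp [Function.update_self, hiu]
          · simp [Function.update_of_ne hx, hx]
        rw [hset, Finset.card_erase_of_mem hmem]
        obtain ⟨n, hn⟩ : ∃ n, (Finset.univ.filter (fun x => G.Adj w x ∧ c x = c u)).card = n + 1 :=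
          ⟨_, (Nat.succ_pred_eq_of_pos (Finset.card_pos.2 ⟨u, hmem⟩)).symm⟩
        rw [hn]
        simp [Nat.odd_add_one, Nat.not_odd_iff_even, Nat.even_add_one]
      · by_cases h2 : t = i
        · have hcu : ¬ c u = t := fun h => hiu ((h.trans h2).symm)
          have hnmem : u ∉ Finset.univ.filter (fun x => G.Adj w x ∧ c x = t) := by
            simp [hcu]
          have hset : Finset.univ.filter (fun x => G.Adj w x ∧ Function.update c u i x = t)
              = insert u (Finset.univ.filter (fun x => G.Adj w x ∧ c x = t)) := by
            ext x
            by_cases hx : x = u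
            · subst hx; simp [Function.update_self, hwu, h2.symm]
            · simp [Function.update_of_ne hx, hx]
          rw [hset, Finset.card_insert_of_notMem hnmem]
          simp [Nat.odd_add_one, h1, h2, Nat.not_odd_iff_even]
        · have hset : Finset.univ.filter (fun x => G.Adj w x ∧ Function.update c u i x = t)
              = Finset.univ.filter (fun x => G.Adj w x ∧ c x = t) := by
            ext x
            by_cases hx : x = u
            · subst hx; simp [Function.update_self, Ne.symm h1, Ne.symm h2]
            · simp [Function.update_of_ne hx]
          rw [hset]
          simp [h1, h2]
    constructor
    · rintro ⟨he, -⟩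
      refine ⟨hadj, Set.ext fun t => ?_⟩
      have ht : t ∉ witnessSet G (Function.update c u i) w := by simp [he]
      simp only [witnessSet, Set.mem_setOf_eq] at ht ⊢
      rw [flip t] at ht
      constructor
      · intro hodd
        by_contra hmem
        simp only [Set.mem_insert_iff, Set.mem_singleton_iff] at hmem
        exact ht ((iff_of_false hmem (not_not.2 hodd)))
      · intro hmem
        simp only [Set.mem_insert_iff, Set.mem_singleton_iff] at hmem
        by_contra hodd
        exact ht (iff_of_true hmem hodd)
    · rintro ⟨-, hW⟩
      constructor
      · ext t
        simp only [witnessSet, Set.mem_setOf_eq, Set.mem_empty_iff_false, iff_false]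
        rw [flip t]
        have := Set.ext_iff.1 hW t
        simp only [witnessSet, Set.mem_setOf_eq, Set.mem_insert_iff, Set.mem_singleton_iff] at this
        tauto
      · intro h
        have : c u ∈ witnessSet G c w := by rw [hW]; simp
        rw [h] at this; exact this
  · have same : ∀ t, nbrColorCount G (Function.update c u i) w t = nbrColorCount G c w t := by
      intro t
      rw [key, key]
      congr 1
      ext x
      by_cases hx : x = u
      · have hnw : ¬ G.Adj w u := fun h => hadj h.symm
        subst hx
        simp [hnw]
      · simp [Function.update_of_ne hx]
    constructor
    · rintro ⟨he, hne⟩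
      exfalso
      apply hne
      ext t
      have := Set.ext_iff.1 he t
      simpa [witnessSet, same t] using this
    · rintro ⟨hA, -⟩; exact absurd hA hadj
end

section
/- Let c be a proper vertex coloring of a graph G, let u be a vertex, and let i, j be two distinct colors, neither appearing in the closed neighborhood of u. Then the sets U(c_u^i) \ U(c) and U(c_u^j) \ U(c) are disjoint, where U(d) denotes the set of vertices having no color appearing an odd number of times in their neighborhood under coloring d, and c_u^i denotes the coloring obtained from c by recoloring u with i. -/
lemma count_update_nonadj {V : Type*} [Fintype V] [DecidableEq V] (G : SimpleGraph V)
    (c : V → ℕ) (u w : V) (hw : ¬ G.Adj w u) (a t : ℕ) :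
    nbrColorCount G (Function.update c u a) w t = nbrColorCount G c w t := by
  unfold nbrColorCount
  apply Nat.card_congr
  apply Equiv.subtypeEquivRight
  intro x
  have key : G.Adj w x → Function.update c u a x = c x := by
    intro h1
    have hx : x ≠ u := fun h => hw (h ▸ h1)
    exact Function.update_of_ne hx _ _
  constructor <;> rintro ⟨h1, h2⟩ <;> exact ⟨h1, by rw [key h1] at *; exact h2⟩

lemma count_update_adj_self {V : Type*} [Fintype V] [DecidableEq V] (G : SimpleGraph V)
    (c : V → ℕ) (u w : V) (hw : G.Adj w u) (a : ℕ) (ha : a ≠ c u) :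
    nbrColorCount G (Function.update c u a) w a = nbrColorCount G c w a + 1 := by
  unfold nbrColorCount
  have h1 : (Nat.card {x // G.Adj w x ∧ Function.update c u a x = a}) =
      Set.ncard {x | G.Adj w x ∧ Function.update c u a x = a} :=
    Nat.card_coe_set_eq _
  have h2 : (Nat.card {x // G.Adj w x ∧ c x = a}) =
      Set.ncard {x | G.Adj w x ∧ c x = a} := Nat.card_coe_set_eq _
  rw [h1, h2]
  have hset : {x | G.Adj w x ∧ Function.update c u a x = a} =
      insert u {x | G.Adj w x ∧ c x = a} := by
    ext x
    simp only [Set.mem_setOf_eq, Set.mem_insert_iff]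
    constructor
    · rintro ⟨hx1, hx2⟩
      by_cases hxu : x = u
      · exact Or.inl hxu
      · rw [Function.update_of_ne hxu] at hx2; exact Or.inr ⟨hx1, hx2⟩
    · rintro (rfl | ⟨hx1, hx2⟩)
      · exact ⟨hw, Function.update_self _ _ _⟩
      · have hxu : x ≠ u := fun h => ha (h ▸ hx2).symm
        exact ⟨hx1, by rw [Function.update_of_ne hxu]; exact hx2⟩
  rw [hset]
  rw [Set.ncard_insert_of_notMem (by simp only [Set.mem_setOf_eq]; rintro ⟨-, h⟩; exact ha h.symm)
    (Set.toFinite _)]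

lemma count_update_adj_other {V : Type*} [Fintype V] [DecidableEq V] (G : SimpleGraph V)
    (c : V → ℕ) (u w : V) (a t : ℕ) (hat : a ≠ t) (htu : t ≠ c u) :
    nbrColorCount G (Function.update c u a) w t = nbrColorCount G c w t := by
  unfold nbrColorCount
  apply Nat.card_congr
  apply Equiv.subtypeEquivRight
  intro x
  constructor
  · rintro ⟨h1, h2⟩
    by_cases hxu : x = u
    · subst hxu; rw [Function.update_self] at h2; exact absurd h2 hat
    · rw [Function.update_of_ne hxu] at h2; exact ⟨h1, h2⟩
  · rintro ⟨h1, h2⟩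
    have hxu : x ≠ u := fun h => htu (h ▸ h2).symm
    exact ⟨h1, by rw [Function.update_of_ne hxu]; exact h2⟩

theorem stmt_3 {V : Type*} [Fintype V] [DecidableEq V] (G : SimpleGraph V)
    (c : V → ℕ) (hc : properColoring G c) (u : V) (i j : ℕ) (hij : i ≠ j)
    (hiu : i ≠ c u) (hiN : ∀ x, G.Adj u x → c x ≠ i)
    (hju : j ≠ c u) (hjN : ∀ x, G.Adj u x → c x ≠ j) :
    Disjoint
      {w | witnessSet G (Function.update c u i) w = ∅ ∧ witnessSet G c w ≠ ∅}
      {w | witnessSet G (Function.update c u j) w = ∅ ∧ witnessSet G c w ≠ ∅} := by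
  rw [Set.disjoint_left]
  rintro w ⟨hi1, hi2⟩ ⟨hj1, hj2⟩
  by_cases hadj : G.Adj w u
  · -- look at color i at vertex w
    have e1 : nbrColorCount G (Function.update c u i) w i = nbrColorCount G c w i + 1 :=
      count_update_adj_self G c u w hadj i hiu
    have e2 : nbrColorCount G (Function.update c u j) w i = nbrColorCount G c w i :=
      count_update_adj_other G c u w j i (Ne.symm hij) hiu
    have h1 : ¬ Odd (nbrColorCount G (Function.update c u i) w i) := by
      intro h
      exact Set.eq_empty_iff_forall_notMem.mp hi1 i h
    have h2 : ¬ Odd (nbrColorCount G (Function.update c u j) w i) := by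
      intro h
      exact Set.eq_empty_iff_forall_notMem.mp hj1 i h
    rw [e1] at h1
    rw [e2] at h2
    rw [Nat.odd_add_one, not_not] at h1
    exact h2 h1
  · apply hi2
    ext t
    simp only [witnessSet, Set.mem_setOf_eq, Set.mem_empty_iff_false, iff_false]
    intro h
    rw [← count_update_nonadj G c u w hadj i t] at h
    exact Set.eq_empty_iff_forall_notMem.mp hi1 t h
end

section
/- In any proper vertex coloring of a claw-free graph, every color appears at most twice in the neighborhood of each vertex. Consequently, a proper coloring of a claw-free graph is conflict-free (every non-isolated vertex has a color appearing exactly once in its neighborhood) if and only if it is odd (every non-isolated vertex has a color appearing an odd number of times in its neighborhood). In particular, χ_pcf(G) = χ_o(G) for every claw-free graph G. -/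
/-- A graph is claw-free: no induced `K_{1,3}`. -/
def ClawFree {V : Type*} (G : SimpleGraph V) : Prop :=
  ∀ v a b d, G.Adj v a → G.Adj v b → G.Adj v d → a ≠ b → a ≠ d → b ≠ d →
    G.Adj a b ∨ G.Adj a d ∨ G.Adj b d

/-- A conflict-free coloring. -/
def conflictFree {V : Type*} {α : Type*} (G : SimpleGraph V) (c : V → α) : Prop :=
  ∀ v, (∃ x, G.Adj v x) → ∃ t, nbrColorCount G c v t = 1

/-- An odd coloring. -/
def oddColoring {V : Type*} {α : Type*} (G : SimpleGraph V) (c : V → α) : Prop :=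
  ∀ v, (∃ x, G.Adj v x) → ∃ t, Odd (nbrColorCount G c v t)

lemma count_le_two {V : Type*} [Fintype V] {α : Type*} (G : SimpleGraph V)
    (hclaw : ClawFree G) (c : V → α) (hc : properColoring G c) (v : V) (t : α) :
    nbrColorCount G c v t ≤ 2 := by
  by_contra h
  push_neg at h
  have h2 : 2 < ({x | G.Adj v x ∧ c x = t} : Set V).ncard := by
    rw [← Nat.card_coe_set_eq]
    exact h
  rw [Set.two_lt_ncard (Set.toFinite _)] at h2
  obtain ⟨a, ⟨hva, hca⟩, b, ⟨hvb, hcb⟩, d, ⟨hvd, hcd⟩, hab, had, hbd⟩ := h2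
  rcases hclaw v a b d hva hvb hvd hab had hbd with hadj | hadj | hadj
  · exact hc hadj (hca.trans hcb.symm)
  · exact hc hadj (hca.trans hcd.symm)
  · exact hc hadj (hcb.trans hcd.symm)

lemma cf_iff_odd {V : Type*} [Fintype V] {α : Type*} (G : SimpleGraph V)
    (hclaw : ClawFree G) (c : V → α) (hc : properColoring G c) :
    conflictFree G c ↔ oddColoring G c := by
  constructor
  · intro h v hv
    obtain ⟨t, ht⟩ := h v hv
    exact ⟨t, by rw [ht]; exact odd_one⟩
  · intro h v hv
    obtain ⟨t, ht⟩ := h v hv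
    have hle := count_le_two G hclaw c hc v t
    obtain ⟨m, hm⟩ := ht
    exact ⟨t, by omega⟩

theorem stmt_6 {V : Type*} [Fintype V] [DecidableEq V] (G : SimpleGraph V)
    (hclaw : ClawFree G) :
    (∀ (c : V → ℕ), properColoring G c → ∀ v t, nbrColorCount G c v t ≤ 2) ∧
    (∀ (c : V → ℕ), properColoring G c → (conflictFree G c ↔ oddColoring G c)) ∧
    (∀ k : ℕ, (∃ c : V → Fin k, properColoring G c ∧ conflictFree G c) ↔
      (∃ c : V → Fin k, properColoring G c ∧ oddColoring G c)) := by
  refine ⟨fun c hc v t => count_le_two G hclaw c hc v t,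
    fun c hc => cf_iff_odd G hclaw c hc, fun k => ?_⟩
  constructor
  · rintro ⟨c, hc, hcf⟩
    exact ⟨c, hc, (cf_iff_odd G hclaw c hc).mp hcf⟩
  · rintro ⟨c, hc, ho⟩
    exact ⟨c, hc, (cf_iff_odd G hclaw c hc).mpr ho⟩
end

section
/- Let G be a quasi-line graph with a proper vertex coloring c using at most Δ(G)+4 colors. If u is a c-critical vertex, then the degree of u is even and the number of distinct colors on the closed neighborhood of u equals d(u)/2 + 2. Moreover, every c-critical vertex w adjacent to u satisfies d(w) = d(u). -/
/-- A quasi-line graph: every neighborhood partitions into two cliques. -/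
def QuasiLine {V : Type*} (G : SimpleGraph V) : Prop :=
  ∀ v, ∃ K1 K2 : Set V, Disjoint K1 K2 ∧ K1 ∪ K2 = {x | G.Adj v x} ∧
    G.IsClique K1 ∧ G.IsClique K2

open Finset

lemma clique_injOn {V α : Type*} {G : SimpleGraph V} {c : V → α}
    (hc : properColoring G c) {s : Set V} (hs : G.IsClique s) : Set.InjOn c s := by
  intro x hx y hy hxy
  by_contra hne
  exact hc (hs hx hy hne) hxy

lemma nbrColorCount_eq {V α : Type*} [Fintype V] [DecidableEq V] [DecidableEq α]
    (G : SimpleGraph V) [DecidableRel G.Adj] (c : V → α) (v : V) (t : α) :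
    nbrColorCount G c v t = ((G.neighborFinset v).filter (fun x => c x = t)).card := by
  rw [nbrColorCount, Nat.card_eq_fintype_card, Fintype.card_subtype]
  congr 1
  ext x
  simp [SimpleGraph.mem_neighborFinset]

lemma crit_main {V α : Type*} [Fintype V] [DecidableEq V] [DecidableEq α]
    (G : SimpleGraph V) [DecidableRel G.Adj] (hql : QuasiLine G)
    (c : V → α) (hc : properColoring G c) (v : V) (hv : isCritical G c v) :
    ∃ (v1 v2 : V) (F1 F2 : Finset V),
      ¬ G.Adj v1 v2 ∧ c v1 ≠ c v2 ∧ G.Adj v v1 ∧ G.Adj v v2 ∧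
      F1 ∪ F2 = G.neighborFinset v ∧
      G.IsClique (↑F1 : Set V) ∧ G.IsClique (↑F2 : Set V) ∧
      2 * F1.card = G.degree v ∧ 2 * F2.card = G.degree v ∧
      2 * ((G.neighborFinset v).image c).card = G.degree v + 2 ∧
      (∀ x ∈ G.neighborFinset v, c x = c v1 → x = v1) ∧
      (∀ x ∈ G.neighborFinset v, c x = c v2 → x = v2) := by
  classical
  obtain ⟨v1, v2, hvv1, hvv2, hnadj, hcc, hW⟩ := hv
  obtain ⟨K1, K2, hdisj, hunion, hcl1, hcl2⟩ := hql v
  set Nv := G.neighborFinset v with hNv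
  set A := Nv.image c with hA
  set cnt : α → ℕ := fun t => (Nv.filter (fun x => c x = t)).card with hcnt
  have hmemK : ∀ x, x ∈ Nv → x ∈ K1 ∪ K2 := by
    intro x hx
    rw [hunion]
    exact (SimpleGraph.mem_neighborFinset G v x).mp hx
  -- each color appears at most twice
  have hcnt_le : ∀ t, cnt t ≤ 2 := by
    intro t
    have : (Nv.filter (fun x => c x = t)).card ≤ (Finset.univ : Finset (Fin 2)).card := by
      apply Finset.card_le_card_of_injOn (fun x => if x ∈ K1 then (0 : Fin 2) else 1)
        (fun x _ => Finset.mem_univ _)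
      intro x hx y hy hfxy
      simp only [Finset.mem_coe, Finset.mem_filter] at hx hy
      by_contra hne
      have hnadjxy : ¬ G.Adj x y := by
        intro h
        exact hc h (hx.2.trans hy.2.symm)
      have hxK := hmemK x hx.1
      have hyK := hmemK y hy.1
      by_cases h1 : x ∈ K1 <;> by_cases h2 : y ∈ K1 <;> simp [h1, h2] at hfxy
      · exact hnadjxy (hcl1 h1 h2 hne)
      · have hx2 : x ∈ K2 := hxK.resolve_left h1
        have hy2 : y ∈ K2 := hyK.resolve_left h2
        exact hnadjxy (hcl2 hx2 hy2 hne)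
    simpa using this
  -- witness characterization
  have hodd : ∀ t, Odd (cnt t) ↔ (t = c v1 ∨ t = c v2) := by
    intro t
    have := Set.ext_iff.mp hW t
    simp only [witnessSet, Set.mem_setOf_eq, Set.mem_insert_iff, Set.mem_singleton_iff] at this
    rw [← this, nbrColorCount_eq]
  have hone : ∀ t, t = c v1 ∨ t = c v2 → cnt t = 1 := by
    intro t ht
    have h1 := (hodd t).mpr ht
    have h2 := hcnt_le t
    rw [Nat.odd_iff] at h1
    omega
  have hmemA : ∀ t ∈ A, 1 ≤ cnt t := by
    intro t ht
    obtain ⟨x, hx, hxt⟩ := Finset.mem_image.mp ht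
    have : x ∈ Nv.filter (fun x => c x = t) := Finset.mem_filter.mpr ⟨hx, hxt⟩
    exact Finset.card_pos.mpr ⟨x, this⟩
  have htwo : ∀ t ∈ A, ¬(t = c v1 ∨ t = c v2) → cnt t = 2 := by
    intro t ht hnot
    have h1 := hmemA t ht
    have h2 := hcnt_le t
    have h3 : ¬ Odd (cnt t) := fun h => hnot ((hodd t).mp h)
    rw [Nat.odd_iff] at h3
    omega
  have hv1N : v1 ∈ Nv := (SimpleGraph.mem_neighborFinset G v v1).mpr hvv1
  have hv2N : v2 ∈ Nv := (SimpleGraph.mem_neighborFinset G v v2).mpr hvv2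
  set P : Finset α := {c v1, c v2} with hP
  have hPA : P ⊆ A := by
    intro t ht
    rw [hP, Finset.mem_insert, Finset.mem_singleton] at ht
    rcases ht with h | h
    · exact h ▸ Finset.mem_image_of_mem c hv1N
    · exact h ▸ Finset.mem_image_of_mem c hv2N
  have hPcard : P.card = 2 := Finset.card_pair hcc
  have hdeg : G.degree v = Nv.card := rfl
  have hsum : Nv.card = ∑ t ∈ A, cnt t :=
    Finset.card_eq_sum_card_fiberwise (fun x hx => Finset.mem_image_of_mem c hx)
  have hsumP : ∑ t ∈ P, cnt t = 2 := by
    rw [hP, Finset.sum_pair hcc, hone (c v1) (Or.inl rfl), hone (c v2) (Or.inr rfl)]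
  have hsumAP : ∑ t ∈ A \ P, cnt t = 2 * (A.card - P.card) := by
    have h2 : ∀ t ∈ A \ P, cnt t = 2 := by
      intro t ht
      rw [Finset.mem_sdiff] at ht
      refine htwo t ht.1 ?_
      intro h
      apply ht.2
      rw [hP]
      rcases h with h | h <;> simp [h]
    rw [Finset.sum_congr rfl h2, Finset.sum_const, Finset.card_sdiff_of_subset hPA, smul_eq_mul, mul_comm]
  have hAcard2 : 2 ≤ A.card := hPcard ▸ Finset.card_le_card hPA
  have hAdeg : 2 * A.card = G.degree v + 2 := by
    have := Finset.sum_sdiff (f := cnt) hPA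
    rw [hsumP, hsumAP] at this
    rw [hdeg, hsum, ← this, hPcard]
    omega
  -- uniqueness of singleton-color vertices
  have huniq : ∀ (y : V), y ∈ Nv → ∀ x ∈ Nv, c x = c y → cnt (c y) = 1 → x = y := by
    intro y hy x hx hcx h1
    have hxf : x ∈ Nv.filter (fun z => c z = c y) := Finset.mem_filter.mpr ⟨hx, hcx⟩
    have hyf : y ∈ Nv.filter (fun z => c z = c y) := Finset.mem_filter.mpr ⟨hy, rfl⟩
    exact Finset.card_le_one.mp (le_of_eq h1) x hxf y hyf
  have huniq1 : ∀ x ∈ Nv, c x = c v1 → x = v1 :=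
    fun x hx h => huniq v1 hv1N x hx h (hone _ (Or.inl rfl))
  have huniq2 : ∀ x ∈ Nv, c x = c v2 → x = v2 :=
    fun x hx h => huniq v2 hv2N x hx h (hone _ (Or.inr rfl))
  -- main construction given the arrangement
  have key : ∀ (S T : Set V), Disjoint S T → S ∪ T = {x | G.Adj v x} →
      G.IsClique S → G.IsClique T → v1 ∈ S → v2 ∈ T →
      ∃ (F1 F2 : Finset V),
        F1 ∪ F2 = Nv ∧ G.IsClique (↑F1 : Set V) ∧ G.IsClique (↑F2 : Set V) ∧
        2 * F1.card = G.degree v ∧ 2 * F2.card = G.degree v := by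
    intro S T hdisjST hunST hclS hclT hv1S hv2T
    set F1 := (Set.toFinite S).toFinset with hF1
    set F2 := (Set.toFinite T).toFinset with hF2
    have hm1 : ∀ x, x ∈ F1 ↔ x ∈ S := fun x => Set.Finite.mem_toFinset _
    have hm2 : ∀ x, x ∈ F2 ↔ x ∈ T := fun x => Set.Finite.mem_toFinset _
    have hun : F1 ∪ F2 = Nv := by
      ext x
      rw [Finset.mem_union, hm1, hm2, SimpleGraph.mem_neighborFinset]
      have := Set.ext_iff.mp hunST x
      simpa using this
    have hsub1 : ∀ x ∈ F1, x ∈ Nv := fun x hx => hun ▸ Finset.mem_union_left _ hx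
    have hsub2 : ∀ x ∈ F2, x ∈ Nv := fun x hx => hun ▸ Finset.mem_union_right _ hx
    have hclF1 : G.IsClique (↑F1 : Set V) := by
      have : (↑F1 : Set V) = S := Set.Finite.coe_toFinset _
      rw [this]; exact hclS
    have hclF2 : G.IsClique (↑F2 : Set V) := by
      have : (↑F2 : Set V) = T := Set.Finite.coe_toFinset _
      rw [this]; exact hclT
    have hb1 : F1.card ≤ A.card - 1 := by
      have himg : F1.image c ⊆ A.erase (c v2) := by
        intro t ht
        obtain ⟨x, hx, hxt⟩ := Finset.mem_image.mp ht
        refine Finset.mem_erase.mpr ⟨?_, hxt ▸ Finset.mem_image_of_mem c (hsub1 x hx)⟩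
        intro h
        have : x = v2 := huniq2 x (hsub1 x hx) (hxt.trans h)
        exact (hdisjST.ne_of_mem ((hm1 x).mp hx) hv2T) this
      have hinj : (F1.image c).card = F1.card :=
        Finset.card_image_of_injOn (clique_injOn hc hclF1)
      calc F1.card = (F1.image c).card := hinj.symm
        _ ≤ (A.erase (c v2)).card := Finset.card_le_card himg
        _ = A.card - 1 := Finset.card_erase_of_mem (hPA (by simp [hP]))
    have hb2 : F2.card ≤ A.card - 1 := by
      have himg : F2.image c ⊆ A.erase (c v1) := by
        intro t ht
        obtain ⟨x, hx, hxt⟩ := Finset.mem_image.mp ht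
        refine Finset.mem_erase.mpr ⟨?_, hxt ▸ Finset.mem_image_of_mem c (hsub2 x hx)⟩
        intro h
        have : x = v1 := huniq1 x (hsub2 x hx) (hxt.trans h)
        exact (hdisjST.symm.ne_of_mem ((hm2 x).mp hx) hv1S) this
      have hinj : (F2.image c).card = F2.card :=
        Finset.card_image_of_injOn (clique_injOn hc hclF2)
      calc F2.card = (F2.image c).card := hinj.symm
        _ ≤ (A.erase (c v1)).card := Finset.card_le_card himg
        _ = A.card - 1 := Finset.card_erase_of_mem (hPA (by simp [hP]))
    have hdisjF : Disjoint F1 F2 := by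
      rw [Finset.disjoint_left]
      intro x hx1 hx2
      exact hdisjST.ne_of_mem ((hm1 x).mp hx1) ((hm2 x).mp hx2) rfl
    have hcards : F1.card + F2.card = G.degree v := by
      rw [hdeg, ← hun, Finset.card_union_of_disjoint hdisjF]
    refine ⟨F1, F2, hun, hclF1, hclF2, by omega, by omega⟩
  -- arrange v1, v2 into distinct cliques
  have hv1U := hmemK v1 hv1N
  have hv2U := hmemK v2 hv2N
  have hfinal : ∃ (F1 F2 : Finset V),
      F1 ∪ F2 = Nv ∧ G.IsClique (↑F1 : Set V) ∧ G.IsClique (↑F2 : Set V) ∧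
      2 * F1.card = G.degree v ∧ 2 * F2.card = G.degree v := by
    have hne12 : v1 ≠ v2 := fun h => hcc (h ▸ rfl)
    rcases hv1U with h1 | h1
    · have h2 : v2 ∈ K2 := by
        rcases hv2U with h2 | h2
        · exact absurd (hcl1 h1 h2 hne12) hnadj
        · exact h2
      exact key K1 K2 hdisj hunion hcl1 hcl2 h1 h2
    · have h2 : v2 ∈ K1 := by
        rcases hv2U with h2 | h2
        · exact h2
        · exact absurd (hcl2 h1 h2 hne12) hnadj
      exact key K2 K1 hdisj.symm (by rw [Set.union_comm]; exact hunion) hcl2 hcl1 h1 h2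
  obtain ⟨F1, F2, hun, hclF1, hclF2, hc1, hc2⟩ := hfinal
  exact ⟨v1, v2, F1, F2, hnadj, hcc, hvv1, hvv2, hun, hclF1, hclF2, hc1, hc2, hAdeg, huniq1, huniq2⟩

lemma deg_le {V α : Type*} [Fintype V] [DecidableEq V] [DecidableEq α]
    (G : SimpleGraph V) [DecidableRel G.Adj] (hql : QuasiLine G)
    (c : V → α) (hc : properColoring G c) {u w : V} (huw : G.Adj u w)
    (hu : isCritical G c u) (hw : isCritical G c w) : G.degree u ≤ G.degree w := by
  classical
  obtain ⟨_, _, F1, F2, _, _, _, _, hun, hcl1, hcl2, hcard1, hcard2, _, _, _⟩ :=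
    crit_main G hql c hc u hu
  obtain ⟨w1, w2, _, _, hnadjw, hccw, hww1, hww2, _, _, _, _, _, hBcard, huniq1, huniq2⟩ :=
    crit_main G hql c hc w hw
  set B := (G.neighborFinset w).image c with hB
  have hwNu : w ∈ G.neighborFinset u := (SimpleGraph.mem_neighborFinset G u w).mpr huw
  have main : ∀ F : Finset V, G.IsClique (↑F : Set V) → 2 * F.card = G.degree u →
      F ⊆ G.neighborFinset u → w ∈ F → G.degree u ≤ G.degree w := by
    intro F hclF hFcard hFsub hwF
    by_contra hlt
    push_neg at hlt
    have hge : G.degree w + 2 ≤ G.degree u := by omega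
    set C := insert u (F.erase w) with hC
    have huF : u ∉ F := by
      intro h
      exact G.notMem_neighborFinset_self u (hFsub h)
    have hFpos : 1 ≤ F.card := Finset.card_pos.mpr ⟨w, hwF⟩
    have hCcard : C.card = F.card := by
      rw [hC, Finset.card_insert_of_notMem (fun h => huF (Finset.mem_of_mem_erase h)),
        Finset.card_erase_of_mem hwF]
      omega
    have hCsub : C ⊆ G.neighborFinset w := by
      intro x hx
      rw [hC, Finset.mem_insert] at hx
      rcases hx with h | h
      · exact h ▸ (SimpleGraph.mem_neighborFinset G w u).mpr huw.symm
      · obtain ⟨hne, hxF⟩ := Finset.mem_erase.mp h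
        exact (SimpleGraph.mem_neighborFinset G w x).mpr
          ((hclF (Finset.mem_coe.mpr hxF) (Finset.mem_coe.mpr hwF) hne).symm)
    have hCclique : G.IsClique (↑C : Set V) := by
      intro x hx y hy hne
      simp only [hC, Finset.coe_insert, Set.mem_insert_iff, Finset.mem_coe,
        Finset.mem_erase] at hx hy
      rcases hx with rfl | ⟨hxw, hxF⟩
      · rcases hy with rfl | ⟨hyw, hyF⟩
        · exact absurd rfl hne
        · exact (SimpleGraph.mem_neighborFinset G x y).mp (hFsub hyF)
      · rcases hy with rfl | ⟨hyw, hyF⟩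
        · exact ((SimpleGraph.mem_neighborFinset G y x).mp (hFsub hxF)).symm
        · exact hclF (Finset.mem_coe.mpr hxF) (Finset.mem_coe.mpr hyF) hne
    have himg : C.image c ⊆ B := Finset.image_subset_image hCsub
    have hinj : (C.image c).card = C.card :=
      Finset.card_image_of_injOn (clique_injOn hc hCclique)
    have hle : B.card ≤ (C.image c).card := by
      rw [hinj, hCcard]
      omega
    have heq : C.image c = B := Finset.eq_of_subset_of_card_le himg hle
    have hw1C : w1 ∈ C := by
      have : c w1 ∈ B := Finset.mem_image_of_mem c
        ((SimpleGraph.mem_neighborFinset G w w1).mpr hww1)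
      rw [← heq] at this
      obtain ⟨x, hx, hxc⟩ := Finset.mem_image.mp this
      have := huniq1 x (hCsub hx) hxc
      exact this ▸ hx
    have hw2C : w2 ∈ C := by
      have : c w2 ∈ B := Finset.mem_image_of_mem c
        ((SimpleGraph.mem_neighborFinset G w w2).mpr hww2)
      rw [← heq] at this
      obtain ⟨x, hx, hxc⟩ := Finset.mem_image.mp this
      have := huniq2 x (hCsub hx) hxc
      exact this ▸ hx
    have hne12 : w1 ≠ w2 := fun h => hccw (h ▸ rfl)
    exact hnadjw (hCclique (Finset.mem_coe.mpr hw1C) (Finset.mem_coe.mpr hw2C) hne12)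
  have : w ∈ F1 ∪ F2 := hun ▸ hwNu
  rcases Finset.mem_union.mp this with h | h
  · exact main F1 hcl1 hcard1 (hun ▸ Finset.subset_union_left) h
  · exact main F2 hcl2 hcard2 (hun ▸ Finset.subset_union_right) h

theorem stmt_7 {V : Type*} [Fintype V] [DecidableEq V] (G : SimpleGraph V)
    [DecidableRel G.Adj] (hql : QuasiLine G)
    (c : V → Fin (G.maxDegree + 4)) (hc : properColoring G c)
    (u : V) (hu : isCritical G c u) :
    Even (G.degree u) ∧
    (c '' (insert u {x | G.Adj u x})).ncard = G.degree u / 2 + 2 ∧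
    (∀ w, G.Adj u w → isCritical G c w → G.degree w = G.degree u) := by
  classical
  obtain ⟨v1, v2, F1, F2, _, _, _, _, _, _, _, hcard1, _, hAdeg, _, _⟩ :=
    crit_main G hql c hc u hu
  refine ⟨⟨F1.card, by omega⟩, ?_, ?_⟩
  · have h1 : {x | G.Adj u x} = ↑(G.neighborFinset u) := by
      ext x; simp
    have h2 : c '' (insert u {x | G.Adj u x}) = ↑((insert u (G.neighborFinset u)).image c) := by
      rw [h1, ← Finset.coe_insert, Finset.coe_image]
    rw [h2, Set.ncard_coe_finset, Finset.image_insert,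
      Finset.card_insert_of_notMem]
    · omega
    · intro h
      obtain ⟨x, hx, hxc⟩ := Finset.mem_image.mp h
      exact hc ((SimpleGraph.mem_neighborFinset G u x).mp hx) hxc.symm
  · intro w huw hw
    exact le_antisymm (deg_le G hql c hc huw.symm hw hu) (deg_le G hql c hc huw hu hw)
end

section
/- For every k ≥ 1, the full subdivision S(K_{2k,2k}) of the complete bipartite graph K_{2k,2k} has proper odd chromatic number at least 4. -/
/-- The full subdivision `S(G)`. -/
def fullSubdivision {V : Type*} (G : SimpleGraph V) : SimpleGraph (V ⊕ G.edgeSet) :=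
  SimpleGraph.fromRel (fun a b =>
    ∃ (v : V) (e : G.edgeSet), a = Sum.inl v ∧ b = Sum.inr e ∧ v ∈ (e : Sym2 V))

open Sum

lemma fs_adj_inl {V : Type*} (G : SimpleGraph V) (v : V) (x : V ⊕ G.edgeSet) :
    (fullSubdivision G).Adj (inl v) x ↔ ∃ e : G.edgeSet, x = inr e ∧ v ∈ (e : Sym2 V) := by
  cases x <;> simp [fullSubdivision]

lemma fs_adj_inr {V : Type*} (G : SimpleGraph V) (e : G.edgeSet) (x : V ⊕ G.edgeSet) :
    (fullSubdivision G).Adj (inr e) x ↔ ∃ v : V, x = inl v ∧ v ∈ (e : Sym2 V) := by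
  cases x <;> simp [fullSubdivision]

lemma fin3_eq (a b x y : Fin 3) (hab : a ≠ b) (hxa : x ≠ a) (hxb : x ≠ b)
    (hya : y ≠ a) (hyb : y ≠ b) : x = y := by revert a b x y; decide

section KB
variable {n : ℕ}

/-- The edge of the complete bipartite graph between `inl i` and `inr j`. -/
def eij (i j : Fin n) : (completeBipartiteGraph (Fin n) (Fin n)).edgeSet :=
  ⟨s(inl i, inr j), by simp⟩

lemma mem_eij (i j : Fin n) (v : Fin n ⊕ Fin n) :
    v ∈ ((eij i j : (completeBipartiteGraph (Fin n) (Fin n)).edgeSet) : Sym2 (Fin n ⊕ Fin n))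
      ↔ v = inl i ∨ v = inr j := by
  simp [eij]

lemma edge_of_mem_left (e : (completeBipartiteGraph (Fin n) (Fin n)).edgeSet) (i : Fin n)
    (h : (inl i : Fin n ⊕ Fin n) ∈ (e : Sym2 (Fin n ⊕ Fin n))) :
    ∃ j : Fin n, e = eij i j := by
  obtain ⟨e, he⟩ := e
  induction e with
  | _ u w =>
    simp only [SimpleGraph.mem_edgeSet, completeBipartiteGraph_adj] at he
    simp only [Sym2.mem_iff] at h
    rcases h with h | h
    · subst h
      rcases he with ⟨h1, h2⟩ | ⟨h1, h2⟩
      · rw [Sum.isRight_iff] at h2; obtain ⟨j, rfl⟩ := h2; exact ⟨j, rfl⟩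
      · simp at h1
    · subst h
      rcases he with ⟨h1, h2⟩ | ⟨h1, h2⟩
      · simp at h2
      · rw [Sum.isRight_iff] at h1; obtain ⟨j, rfl⟩ := h1
        exact ⟨j, Subtype.ext Sym2.eq_swap⟩

lemma edge_of_mem_right (e : (completeBipartiteGraph (Fin n) (Fin n)).edgeSet) (j : Fin n)
    (h : (inr j : Fin n ⊕ Fin n) ∈ (e : Sym2 (Fin n ⊕ Fin n))) :
    ∃ i : Fin n, e = eij i j := by
  obtain ⟨e, he⟩ := e
  induction e with
  | _ u w =>
    simp only [SimpleGraph.mem_edgeSet, completeBipartiteGraph_adj] at he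
    simp only [Sym2.mem_iff] at h
    rcases h with h | h
    · subst h
      rcases he with ⟨h1, h2⟩ | ⟨h1, h2⟩
      · simp at h1
      · rw [Sum.isLeft_iff] at h2; obtain ⟨i, rfl⟩ := h2
        exact ⟨i, Subtype.ext Sym2.eq_swap⟩
    · subst h
      rcases he with ⟨h1, h2⟩ | ⟨h1, h2⟩
      · rw [Sum.isLeft_iff] at h1; obtain ⟨i, rfl⟩ := h1; exact ⟨i, rfl⟩
      · simp at h2

/-- Count of colors at a subdivision vertex whose two neighbors share a color: always even. -/
lemma even_count_at_edge (c : (Fin n ⊕ Fin n) ⊕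
      (completeBipartiteGraph (Fin n) (Fin n)).edgeSet → Fin 3)
    (i j : Fin n) (heq : c (inl (inl i)) = c (inl (inr j))) (t : Fin 3) :
    Even (nbrColorCount (fullSubdivision (completeBipartiteGraph (Fin n) (Fin n))) c
      (inr (eij i j)) t) := by
  have hset : ∀ x, ((fullSubdivision (completeBipartiteGraph (Fin n) (Fin n))).Adj
      (inr (eij i j)) x ∧ c x = t) ↔ ((x = inl (inl i) ∨ x = inl (inr j)) ∧ c x = t) := by
    intro x
    rw [fs_adj_inr]
    constructor
    · rintro ⟨⟨v, rfl, hv⟩, hc⟩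
      rw [mem_eij] at hv
      rcases hv with rfl | rfl
      · exact ⟨Or.inl rfl, hc⟩
      · exact ⟨Or.inr rfl, hc⟩
    · rintro ⟨h, hc⟩
      rcases h with rfl | rfl
      · exact ⟨⟨inl i, rfl, by rw [mem_eij]; exact Or.inl rfl⟩, hc⟩
      · exact ⟨⟨inr j, rfl, by rw [mem_eij]; exact Or.inr rfl⟩, hc⟩
  unfold nbrColorCount
  by_cases ht : t = c (inl (inl i))
  · have : {x | (fullSubdivision (completeBipartiteGraph (Fin n) (Fin n))).Adj
        (inr (eij i j)) x ∧ c x = t} = {inl (inl i), inl (inr j)} := by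
      ext x
      rw [Set.mem_setOf_eq, hset]
      simp only [Set.mem_insert_iff, Set.mem_singleton_iff]
      constructor
      · exact fun h => h.1
      · rintro (rfl | rfl)
        · exact ⟨Or.inl rfl, ht.symm⟩
        · exact ⟨Or.inr rfl, by rw [← heq, ht]⟩
    rw [show {x // (fullSubdivision (completeBipartiteGraph (Fin n) (Fin n))).Adj
        (inr (eij i j)) x ∧ c x = t} = ↥{x | (fullSubdivision
        (completeBipartiteGraph (Fin n) (Fin n))).Adj (inr (eij i j)) x ∧ c x = t} from rfl,
      Nat.card_coe_set_eq, this, Set.ncard_pair (by simp)]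
    exact even_two
  · have : {x | (fullSubdivision (completeBipartiteGraph (Fin n) (Fin n))).Adj
        (inr (eij i j)) x ∧ c x = t} = ∅ := by
      ext x
      rw [Set.mem_setOf_eq, hset]
      simp only [Set.mem_empty_iff_false, iff_false]
      rintro ⟨(rfl | rfl), hc⟩
      · exact ht hc.symm
      · exact ht (by rw [← hc, heq])
    rw [show {x // (fullSubdivision (completeBipartiteGraph (Fin n) (Fin n))).Adj
        (inr (eij i j)) x ∧ c x = t} = ↥{x | (fullSubdivision
        (completeBipartiteGraph (Fin n) (Fin n))).Adj (inr (eij i j)) x ∧ c x = t} from rfl,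
      Nat.card_coe_set_eq, this, Set.ncard_empty]
    exact Even.zero

/-- No two original vertices on opposite sides get the same color. -/
lemma opp_colors_ne (c : (Fin n ⊕ Fin n) ⊕
      (completeBipartiteGraph (Fin n) (Fin n)).edgeSet → Fin 3)
    (ho : oddColoring (fullSubdivision (completeBipartiteGraph (Fin n) (Fin n))) c)
    (i j : Fin n) : c (inl (inl i)) ≠ c (inl (inr j)) := by
  intro heq
  obtain ⟨t, ht⟩ := ho (inr (eij i j))
    ⟨inl (inl i), by rw [fs_adj_inr]; exact ⟨inl i, rfl, by rw [mem_eij]; exact Or.inl rfl⟩⟩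
  exact (Nat.not_odd_iff_even.mpr (even_count_at_edge c i j heq t)) ht

lemma eij_left_inj (i0 : Fin n) : Function.Injective (fun j : Fin n => eij i0 j) := by
  intro a b h
  simpa [eij, Subtype.ext_iff, Sym2.eq_iff] using h

lemma eij_right_inj (j0 : Fin n) : Function.Injective (fun i : Fin n => eij i j0) := by
  intro a b h
  simpa [eij, Subtype.ext_iff, Sym2.eq_iff] using h

/-- Count of colors at a left original vertex all of whose neighbors are colored `γ`. -/
lemma count_at_left (c : (Fin n ⊕ Fin n) ⊕
      (completeBipartiteGraph (Fin n) (Fin n)).edgeSet → Fin 3)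
    (i0 : Fin n) (γ : Fin 3) (hall : ∀ j : Fin n, c (inr (eij i0 j)) = γ) (t : Fin 3) :
    nbrColorCount (fullSubdivision (completeBipartiteGraph (Fin n) (Fin n))) c
      (inl (inl i0)) t = if t = γ then n else 0 := by
  have key : ∀ x, ((fullSubdivision (completeBipartiteGraph (Fin n) (Fin n))).Adj
      (inl (inl i0)) x ∧ c x = t) ↔ ((∃ j : Fin n, x = inr (eij i0 j)) ∧ t = γ) := by
    intro x
    rw [fs_adj_inl]
    constructor
    · rintro ⟨⟨e, rfl, hv⟩, hc⟩
      obtain ⟨j, rfl⟩ := edge_of_mem_left e i0 hv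
      exact ⟨⟨j, rfl⟩, by rw [← hc, hall j]⟩
    · rintro ⟨⟨j, rfl⟩, rfl⟩
      exact ⟨⟨eij i0 j, rfl, by rw [mem_eij]; exact Or.inl rfl⟩, hall j⟩
  unfold nbrColorCount
  rw [show {x // (fullSubdivision (completeBipartiteGraph (Fin n) (Fin n))).Adj
      (inl (inl i0)) x ∧ c x = t} = ↥{x | (fullSubdivision
      (completeBipartiteGraph (Fin n) (Fin n))).Adj (inl (inl i0)) x ∧ c x = t} from rfl,
    Nat.card_coe_set_eq]
  by_cases ht : t = γ
  · have hs : {x | (fullSubdivision (completeBipartiteGraph (Fin n) (Fin n))).Adj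
        (inl (inl i0)) x ∧ c x = t} = Set.range (fun j : Fin n => inr (eij i0 j)) := by
      ext x
      rw [Set.mem_setOf_eq, key, Set.mem_range]
      exact ⟨fun ⟨⟨j, hj⟩, _⟩ => ⟨j, hj.symm⟩, fun ⟨j, hj⟩ => ⟨⟨j, hj.symm⟩, ht⟩⟩
    rw [hs, if_pos ht, ← Nat.card_coe_set_eq,
      Nat.card_range_of_injective (fun a b h => eij_left_inj i0 (Sum.inr_injective h)),
      Nat.card_eq_fintype_card, Fintype.card_fin]
  · have hs : {x | (fullSubdivision (completeBipartiteGraph (Fin n) (Fin n))).Adj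
        (inl (inl i0)) x ∧ c x = t} = ∅ := by
      ext x
      rw [Set.mem_setOf_eq, key]
      simp only [Set.mem_empty_iff_false, iff_false]
      rintro ⟨-, rfl⟩; exact ht rfl
    rw [hs, if_neg ht, Set.ncard_empty]

/-- Count of colors at a right original vertex all of whose neighbors are colored `γ`. -/
lemma count_at_right (c : (Fin n ⊕ Fin n) ⊕
      (completeBipartiteGraph (Fin n) (Fin n)).edgeSet → Fin 3)
    (j0 : Fin n) (γ : Fin 3) (hall : ∀ i : Fin n, c (inr (eij i j0)) = γ) (t : Fin 3) :
    nbrColorCount (fullSubdivision (completeBipartiteGraph (Fin n) (Fin n))) c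
      (inl (inr j0)) t = if t = γ then n else 0 := by
  have key : ∀ x, ((fullSubdivision (completeBipartiteGraph (Fin n) (Fin n))).Adj
      (inl (inr j0)) x ∧ c x = t) ↔ ((∃ i : Fin n, x = inr (eij i j0)) ∧ t = γ) := by
    intro x
    rw [fs_adj_inl]
    constructor
    · rintro ⟨⟨e, rfl, hv⟩, hc⟩
      obtain ⟨i, rfl⟩ := edge_of_mem_right e j0 hv
      exact ⟨⟨i, rfl⟩, by rw [← hc, hall i]⟩
    · rintro ⟨⟨i, rfl⟩, rfl⟩
      exact ⟨⟨eij i j0, rfl, by rw [mem_eij]; exact Or.inr rfl⟩, hall i⟩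
  unfold nbrColorCount
  rw [show {x // (fullSubdivision (completeBipartiteGraph (Fin n) (Fin n))).Adj
      (inl (inr j0)) x ∧ c x = t} = ↥{x | (fullSubdivision
      (completeBipartiteGraph (Fin n) (Fin n))).Adj (inl (inr j0)) x ∧ c x = t} from rfl,
    Nat.card_coe_set_eq]
  by_cases ht : t = γ
  · have hs : {x | (fullSubdivision (completeBipartiteGraph (Fin n) (Fin n))).Adj
        (inl (inr j0)) x ∧ c x = t} = Set.range (fun i : Fin n => inr (eij i j0)) := by
      ext x
      rw [Set.mem_setOf_eq, key, Set.mem_range]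
      exact ⟨fun ⟨⟨i, hi⟩, _⟩ => ⟨i, hi.symm⟩, fun ⟨i, hi⟩ => ⟨⟨i, hi.symm⟩, ht⟩⟩
    rw [hs, if_pos ht, ← Nat.card_coe_set_eq,
      Nat.card_range_of_injective (fun a b h => eij_right_inj j0 (Sum.inr_injective h)),
      Nat.card_eq_fintype_card, Fintype.card_fin]
  · have hs : {x | (fullSubdivision (completeBipartiteGraph (Fin n) (Fin n))).Adj
        (inl (inr j0)) x ∧ c x = t} = ∅ := by
      ext x
      rw [Set.mem_setOf_eq, key]
      simp only [Set.mem_empty_iff_false, iff_false]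
      rintro ⟨-, rfl⟩; exact ht rfl
    rw [hs, if_neg ht, Set.ncard_empty]

/-- Adjacency of an original vertex with an incident subdivision vertex. -/
lemma adj_left_eij (i j : Fin n) :
    (fullSubdivision (completeBipartiteGraph (Fin n) (Fin n))).Adj
      (inl (inl i)) (inr (eij i j)) := by
  rw [fs_adj_inl]; exact ⟨eij i j, rfl, by rw [mem_eij]; exact Or.inl rfl⟩

lemma adj_right_eij (i j : Fin n) :
    (fullSubdivision (completeBipartiteGraph (Fin n) (Fin n))).Adj
      (inl (inr j)) (inr (eij i j)) := by
  rw [fs_adj_inl]; exact ⟨eij i j, rfl, by rw [mem_eij]; exact Or.inr rfl⟩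

end KB

theorem stmt_10 (k : ℕ) (hk : 1 ≤ k) :
    ¬ ∃ c : (Fin (2*k) ⊕ Fin (2*k)) ⊕
        (completeBipartiteGraph (Fin (2*k)) (Fin (2*k))).edgeSet → Fin 3,
      properColoring (fullSubdivision (completeBipartiteGraph (Fin (2*k)) (Fin (2*k)))) c ∧
      oddColoring (fullSubdivision (completeBipartiteGraph (Fin (2*k)) (Fin (2*k)))) c := by
  rintro ⟨c, hp, ho⟩
  haveI : NeZero (2 * k) := ⟨by omega⟩
  have hopp := opp_colors_ne c ho
  have heven : Even (2 * k) := ⟨k, by omega⟩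
  by_cases hA : ∀ i i' : Fin (2*k), c (inl (inl i)) = c (inl (inl i'))
  · -- left side monochromatic; contradiction at right vertex 0
    have hall : ∀ i : Fin (2*k), c (inr (eij i 0)) = c (inr (eij 0 0)) := by
      intro i
      refine fin3_eq (c (inl (inl (0 : Fin (2*k))))) (c (inl (inr (0 : Fin (2*k))))) _ _
        (hopp 0 0) ?_ ?_ ?_ ?_
      · exact fun h => hp (adj_left_eij i 0) ((hA i 0).trans h.symm)
      · exact fun h => hp (adj_right_eij i 0) h.symm
      · exact fun h => hp (adj_left_eij 0 0) h.symm
      · exact fun h => hp (adj_right_eij 0 0) h.symm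
    obtain ⟨t, ht⟩ := ho (inl (inr (0 : Fin (2*k)))) ⟨inr (eij 0 0), adj_right_eij 0 0⟩
    rw [count_at_right c 0 _ hall t] at ht
    by_cases h : t = c (inr (eij (0 : Fin (2*k)) 0))
    · rw [if_pos h] at ht; exact (Nat.not_odd_iff_even.mpr heven) ht
    · rw [if_neg h] at ht; exact (Nat.not_odd_iff_even.mpr Even.zero) ht
  · -- left side not monochromatic; right side is; contradiction at left vertex 0
    push_neg at hA
    obtain ⟨i1, i2, hi⟩ := hA
    have hBmono : ∀ j j' : Fin (2*k), c (inl (inr j)) = c (inl (inr j')) := fun j j' =>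
      fin3_eq (c (inl (inl i1))) (c (inl (inl i2))) _ _ hi
        (fun h => hopp i1 j h.symm) (fun h => hopp i2 j h.symm)
        (fun h => hopp i1 j' h.symm) (fun h => hopp i2 j' h.symm)
    have hall : ∀ j : Fin (2*k), c (inr (eij 0 j)) = c (inr (eij 0 0)) := by
      intro j
      refine fin3_eq (c (inl (inl (0 : Fin (2*k))))) (c (inl (inr (0 : Fin (2*k))))) _ _
        (hopp 0 0) ?_ ?_ ?_ ?_
      · exact fun h => hp (adj_left_eij 0 j) h.symm
      · exact fun h => hp (adj_right_eij 0 j) ((hBmono j 0).trans h.symm)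
      · exact fun h => hp (adj_left_eij 0 0) h.symm
      · exact fun h => hp (adj_right_eij 0 0) h.symm
    obtain ⟨t, ht⟩ := ho (inl (inl (0 : Fin (2*k)))) ⟨inr (eij 0 0), adj_left_eij 0 0⟩
    rw [count_at_left c 0 _ hall t] at ht
    by_cases h : t = c (inr (eij (0 : Fin (2*k)) 0))
    · rw [if_pos h] at ht; exact (Nat.not_odd_iff_even.mpr heven) ht
    · rw [if_neg h] at ht; exact (Nat.not_odd_iff_even.mpr Even.zero) ht
end

section
/- For every graph G, the full subdivision S(G) satisfies χ_o(S(G)) ≥ χ(G); that is, if S(G) admits a proper odd coloring with k colors, then G is properly k-colorable. -/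
theorem stmt_11 {V : Type*} [Fintype V] [DecidableEq V] (G : SimpleGraph V) (k : ℕ)
    (h : ∃ c : V ⊕ G.edgeSet → Fin k,
      properColoring (fullSubdivision G) c ∧ oddColoring (fullSubdivision G) c) :
    G.Colorable k := by
  obtain ⟨c, hp, ho⟩ := h
  refine ⟨⟨fun v => c (Sum.inl v), ?_⟩⟩
  intro u v huv hc
  replace hc : c (Sum.inl u) = c (Sum.inl v) := hc
  have huvne : u ≠ v := G.ne_of_adj huv
  set e : G.edgeSet := ⟨s(u,v), huv⟩ with he
  have hadj : ∀ x, (fullSubdivision G).Adj (Sum.inr e) x ↔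
      (x = Sum.inl u ∨ x = Sum.inl v) := by
    intro x
    rw [fullSubdivision, SimpleGraph.fromRel_adj]
    constructor
    · rintro ⟨hne, ⟨w, e', hw, -, -⟩ | ⟨w, e', hw, he', hmem⟩⟩
      · exact absurd hw (by simp)
      · subst hw
        have : e = e' := Sum.inr.inj he'
        subst this
        have : w ∈ s(u,v) := hmem
        rw [Sym2.mem_iff] at this
        rcases this with h1 | h1 <;> subst h1 <;> simp
    · rintro (rfl | rfl)
      · exact ⟨by simp, Or.inr ⟨u, e, rfl, rfl, by simp [he]⟩⟩
      · exact ⟨by simp, Or.inr ⟨v, e, rfl, rfl, by simp [he]⟩⟩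
  obtain ⟨t, ht⟩ := ho (Sum.inr e) ⟨Sum.inl u, (hadj _).2 (Or.inl rfl)⟩
  have hset : {x | (fullSubdivision G).Adj (Sum.inr e) x ∧ c x = t} =
      if c (Sum.inl u) = t then {Sum.inl u, Sum.inl v} else ∅ := by
    ext x
    by_cases hcu : c (Sum.inl u) = t
    · simp only [hcu, if_true, Set.mem_setOf_eq, Set.mem_insert_iff, Set.mem_singleton_iff]
      constructor
      · rintro ⟨hax, -⟩; exact (hadj x).1 hax
      · rintro (rfl | rfl)
        · exact ⟨(hadj _).2 (Or.inl rfl), hcu⟩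
        · exact ⟨(hadj _).2 (Or.inr rfl), hc ▸ hcu⟩
    · simp only [hcu, if_false, Set.mem_setOf_eq, Set.mem_empty_iff_false, iff_false]
      rintro ⟨hax, hcx⟩
      rcases (hadj x).1 hax with rfl | rfl
      · exact hcu hcx
      · exact hcu (hc ▸ hcx)
  have hcard : nbrColorCount (fullSubdivision G) c (Sum.inr e) t =
      ({x | (fullSubdivision G).Adj (Sum.inr e) x ∧ c x = t} : Set _).ncard := by
    rw [nbrColorCount, ← Nat.card_coe_set_eq]
    rfl
  rw [hcard, hset] at ht
  by_cases hcu : c (Sum.inl u) = t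
  · rw [if_pos hcu, Set.ncard_pair (by simpa using huvne)] at ht
    simp [Nat.odd_iff] at ht
  · rw [if_neg hcu, Set.ncard_empty] at ht
    simp [Nat.odd_iff] at ht
end

section
/- Let F be a nested family of nonempty finite subsets of a finite set V, meaning that for all I, J in F, if I ∩ J ≠ ∅ then I ⊆ J or J ⊆ I. Then there exists c : V → {1,2,3} such that for every I ∈ F there is a color appearing an odd number of times in I and a color appearing an even number of times in I. -/
open Finset

private lemma cast_eq_one_iff_odd (n : ℕ) : (n : ZMod 2) = 1 ↔ Odd n := by
  rw [Nat.odd_iff, ← ZMod.natCast_mod]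
  rcases Nat.mod_two_eq_zero_or_one n with h | h <;> simp [h]

private lemma cast_eq_zero_iff_even (n : ℕ) : (n : ZMod 2) = 0 ↔ Even n := by
  rw [Nat.even_iff, ← ZMod.natCast_mod]
  rcases Nat.mod_two_eq_zero_or_one n with h | h <;> simp [h]

private lemma fin3_succ_ne (a : Fin 3) : a + 1 ≠ a := by revert a; decide

private lemma good_of_target {V : Type*} [DecidableEq V] (c : V → Fin 3) (I : Finset V) (a : Fin 3)
    (h : ∀ t, ((I.filter fun v => c v = t).card : ZMod 2)
      = (if t = a then 1 else 0) + (I.card : ℕ) + 1) :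
    (∃ t, Odd ((I.filter fun v => c v = t).card)) ∧
      (∃ t, Even ((I.filter fun v => c v = t).card)) := by
  rcases Nat.even_or_odd I.card with he | ho
  · have h2 : ((I.card : ℕ) : ZMod 2) = 0 := (cast_eq_zero_iff_even _).2 he
    refine ⟨⟨a + 1, ?_⟩, ⟨a, ?_⟩⟩
    · rw [← cast_eq_one_iff_odd, h, if_neg (fin3_succ_ne a), h2]; decide
    · rw [← cast_eq_zero_iff_even, h, if_pos rfl, h2]; decide
  · have h2 : ((I.card : ℕ) : ZMod 2) = 1 := (cast_eq_one_iff_odd _).2 ho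
    refine ⟨⟨a, ?_⟩, ⟨a + 1, ?_⟩⟩
    · rw [← cast_eq_one_iff_odd, h, if_pos rfl, h2]; decide
    · rw [← cast_eq_zero_iff_even, h, if_neg (fin3_succ_ne a), h2]; decide

private lemma key {V : Type*} [DecidableEq V] :
    ∀ (n : ℕ) (U : Finset V), U.card = n → U.Nonempty →
    ∀ (F : Finset (Finset V)), ∅ ∉ F →
      (∀ I ∈ F, ∀ J ∈ F, (I ∩ J).Nonempty → I ⊆ J ∨ J ⊆ I) →
      (∀ I ∈ F, I ⊆ U) → ∀ a : Fin 3,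
      ∃ c : V → Fin 3,
        (∀ t, (((U.filter fun v => c v = t)).card : ZMod 2)
            = (if t = a then 1 else 0) + (U.card : ℕ) + 1) ∧
        ∀ I ∈ F, (∃ t, Odd ((I.filter fun v => c v = t).card)) ∧
          (∃ t, Even ((I.filter fun v => c v = t).card)) := by
  intro n
  induction n using Nat.strong_induction_on with
  | _ n IH =>
  intro U hcard hUne F hne hnl hsub a
  by_cases hU1 : U.card = 1
  · -- base case : U is a singleton
    obtain ⟨v, hv⟩ := card_eq_one.1 hU1
    have hpar : ∀ t, (((U.filter fun _ : V => a = t)).card : ZMod 2)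
        = (if t = a then 1 else 0) + (U.card : ℕ) + 1 := by
      intro t
      by_cases hta : t = a
      · rw [if_pos hta, hU1]
        have : U.filter (fun _ : V => a = t) = U :=
          filter_true_of_mem (fun x _ => hta.symm)
        rw [this, hU1]; decide
      · rw [if_neg hta, hU1]
        have : U.filter (fun _ : V => a = t) = ∅ :=
          filter_false_of_mem (fun x _ => fun h => hta h.symm)
        rw [this]; simp; decide
    refine ⟨fun _ => a, hpar, fun I hI => ?_⟩
    have hIU : I = U := by
      rcases (subset_singleton_iff.1 (hv ▸ hsub I hI)) with h | h
      · exact absurd (h ▸ hI) hne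
      · rw [h, hv]
    rw [hIU]
    exact good_of_target _ _ a hpar
  · -- inductive step, U.card ≥ 2
    have hU2 : 2 ≤ U.card := by
      have h1 : 1 ≤ U.card := card_pos.2 hUne
      omega
    set F' := F.erase U with hF'
    have hF'F : ∀ K ∈ F', K ∈ F := fun K hK => mem_of_mem_erase hK
    have hF'nemp : ∀ K ∈ F', K.Nonempty := fun K hK =>
      nonempty_iff_ne_empty.2 (fun h => hne (h ▸ hF'F K hK))
    set M := F'.filter (fun J => ∀ K ∈ F', J ⊆ K → J = K) with hM
    have hMF' : ∀ J ∈ M, J ∈ F' := fun J hJ => (mem_filter.1 hJ).1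
    have hMmax : ∀ J ∈ M, ∀ K ∈ F', J ⊆ K → J = K := fun J hJ => (mem_filter.1 hJ).2
    have hcover : ∀ K ∈ F', ∃ J ∈ M, K ⊆ J := by
      intro K hK
      have hS : (F'.filter (K ⊆ ·)).Nonempty := ⟨K, mem_filter.2 ⟨hK, subset_rfl⟩⟩
      obtain ⟨mx, hmx, hmax⟩ : ∃ m ∈ F'.filter (K ⊆ ·), ∀ x ∈ F'.filter (K ⊆ ·), ¬m < x := by
        obtain ⟨i, hi⟩ := exists_maximal hS
        exact ⟨i, hi.1, fun x hx hlt => lt_irrefl _ (hlt.trans_le (hi.2 hx hlt.le))⟩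
      have hmxF' : mx ∈ F' := (mem_filter.1 hmx).1
      have hKmx : K ⊆ mx := (mem_filter.1 hmx).2
      refine ⟨mx, mem_filter.2 ⟨hmxF', fun K' hK' hsub' => ?_⟩, hKmx⟩
      have hK'S : K' ∈ F'.filter (K ⊆ ·) := mem_filter.2 ⟨hK', hKmx.trans hsub'⟩
      by_contra hne'
      exact hmax K' hK'S (lt_of_le_of_ne hsub' hne')
    have hMdisj : ∀ J1 ∈ M, ∀ J2 ∈ M, J1 ≠ J2 → Disjoint J1 J2 := by
      intro J1 h1 J2 h2 h12
      rw [disjoint_iff_inter_eq_empty]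
      by_contra hnee
      have hint : (J1 ∩ J2).Nonempty := nonempty_iff_ne_empty.2 hnee
      rcases hnl J1 (hF'F _ (hMF' _ h1)) J2 (hF'F _ (hMF' _ h2)) hint with h | h
      · exact h12 (hMmax J1 h1 J2 (hMF' _ h2) h)
      · exact h12 ((hMmax J2 h2 J1 (hMF' _ h1) h).symm)
    set B := M.biUnion id with hB
    set children := M ∪ (U \ B).image (fun v => ({v} : Finset V)) with hch
    have hch_ne : ∀ J ∈ children, J.Nonempty := by
      intro J hJ
      rcases mem_union.1 hJ with h | h
      · exact hF'nemp J (hMF' J h)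
      · obtain ⟨v, _, rfl⟩ := mem_image.1 h
        exact singleton_nonempty v
    have hch_sub : ∀ J ∈ children, J ⊆ U := by
      intro J hJ
      rcases mem_union.1 hJ with h | h
      · exact hsub J (hF'F J (hMF' J h))
      · obtain ⟨v, hv, rfl⟩ := mem_image.1 h
        exact singleton_subset_iff.2 (mem_sdiff.1 hv).1
    have hch_lt : ∀ J ∈ children, J.card < n := by
      intro J hJ
      rw [← hcard]
      rcases mem_union.1 hJ with h | h
      · refine card_lt_card (lt_of_le_of_ne (hsub J (hF'F J (hMF' J h))) ?_)
        exact (mem_erase.1 (hMF' J h)).1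
      · obtain ⟨v, _, rfl⟩ := mem_image.1 h
        rw [card_singleton]; omega
    have hch_disj : ∀ J1 ∈ children, ∀ J2 ∈ children, J1 ≠ J2 → Disjoint J1 J2 := by
      intro J1 h1 J2 h2 h12
      rcases mem_union.1 h1 with ha | ha <;> rcases mem_union.1 h2 with hb | hb
      · exact hMdisj J1 ha J2 hb h12
      · obtain ⟨v, hv, rfl⟩ := mem_image.1 hb
        rw [disjoint_singleton_right]
        intro hvJ1
        exact (mem_sdiff.1 hv).2 (mem_biUnion.2 ⟨J1, ha, hvJ1⟩)
      · obtain ⟨v, hv, rfl⟩ := mem_image.1 ha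
        rw [disjoint_singleton_left]
        intro hvJ2
        exact (mem_sdiff.1 hv).2 (mem_biUnion.2 ⟨J2, hb, hvJ2⟩)
      · obtain ⟨v, hv, rfl⟩ := mem_image.1 ha
        obtain ⟨w, hw, rfl⟩ := mem_image.1 hb
        rw [disjoint_singleton_left, mem_singleton]
        intro hvw
        exact h12 (by rw [hvw])
    have hch_cover : U = children.biUnion id := by
      apply Subset.antisymm
      · intro x hx
        by_cases hxB : x ∈ B
        · obtain ⟨J, hJ, hxJ⟩ := mem_biUnion.1 hxB
          exact mem_biUnion.2 ⟨J, mem_union_left _ hJ, hxJ⟩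
        · refine mem_biUnion.2 ⟨{x}, mem_union_right _ ?_, mem_singleton_self x⟩
          exact mem_image.2 ⟨x, mem_sdiff.2 ⟨hx, hxB⟩, rfl⟩
      · intro x hx
        obtain ⟨J, hJ, hxJ⟩ := mem_biUnion.1 hx
        exact hch_sub J hJ hxJ
    have hch_card : ∑ J ∈ children, J.card = U.card := by
      rw [hch_cover]
      exact (card_biUnion (fun J hJ K hK hne' => hch_disj J hJ K hK hne')).symm
    have hch_nonempty : children.Nonempty := by
      rcases children.eq_empty_or_nonempty with h | h
      · exfalso
        rw [h, biUnion_empty] at hch_cover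
        exact not_nonempty_empty (hch_cover ▸ hUne)
      · exact h
    have hIH : ∀ (J : Finset V) (a' : Fin 3), ∃ c : V → Fin 3, J ∈ children →
        (∀ t, (((J.filter fun v => c v = t)).card : ZMod 2)
            = (if t = a' then 1 else 0) + (J.card : ℕ) + 1) ∧
        ∀ K ∈ F', K ⊆ J → (∃ t, Odd ((K.filter fun v => c v = t).card)) ∧
          (∃ t, Even ((K.filter fun v => c v = t).card)) := by
      intro J a'
      by_cases hJ : J ∈ children
      · obtain ⟨c, hc1, hc2⟩ := IH J.card (hch_lt J hJ) J rfl (hch_ne J hJ)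
          (F'.filter (· ⊆ J))
          (fun h => hne (hF'F _ (mem_filter.1 h).1))
          (fun I hI K hK hint => hnl I (hF'F _ (mem_filter.1 hI).1) K
            (hF'F _ (mem_filter.1 hK).1) hint)
          (fun I hI => (mem_filter.1 hI).2) a'
        exact ⟨c, fun _ => ⟨hc1, fun K hK hKJ => hc2 K (mem_filter.2 ⟨hK, hKJ⟩)⟩⟩
      · exact ⟨fun _ => 0, fun h => absurd h hJ⟩
    choose col hcol using hIH
    obtain ⟨J0, hJ0⟩ := hch_nonempty
    set m := children.card with hm
    set s0 : Fin 3 := if Even m then a + 1 else a with hs0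
    set t0 : Fin 3 := if Even m then a + 2 else a with ht0
    set aJ : Finset V → Fin 3 := fun J => if J = J0 then s0 else t0 with haJ
    set c : V → Fin 3 := fun v =>
      if h : ∃ J, J ∈ children ∧ v ∈ J then col h.choose (aJ h.choose) v else 0 with hcdef
    have hcagree : ∀ J ∈ children, ∀ v ∈ J, c v = col J (aJ J) v := by
      intro J hJ v hv
      have h : ∃ J', J' ∈ children ∧ v ∈ J' := ⟨J, hJ, hv⟩
      have he : h.choose = J := by
        by_contra hne'
        exact disjoint_left.1 (hch_disj _ h.choose_spec.1 J hJ hne') h.choose_spec.2 hv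
      simp only [hcdef]
      rw [dif_pos h, he]
    have hfilter : ∀ J ∈ children, ∀ S : Finset V, S ⊆ J → ∀ t : Fin 3,
        S.filter (fun v => c v = t) = S.filter (fun v => col J (aJ J) v = t) := by
      intro J hJ S hS t
      exact filter_congr (fun v hv => by rw [hcagree J hJ v (hS hv)])
    have hm1 : 1 ≤ m := card_pos.2 ⟨J0, hJ0⟩
    have hmsub : ((m - 1 : ℕ) : ZMod 2) = (m : ZMod 2) + 1 := by
      rw [Nat.cast_sub hm1, Nat.cast_one, sub_eq_add_neg]
      norm_num
      decide
    have hpar : ∀ t, (((U.filter fun v => c v = t)).card : ZMod 2)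
        = (if t = a then 1 else 0) + (U.card : ℕ) + 1 := by
      intro t
      have hsplit : (U.filter fun v => c v = t).card
          = ∑ J ∈ children, (J.filter fun v => c v = t).card := by
        rw [hch_cover, filter_biUnion]
        exact card_biUnion (fun J hJ K hK hne' =>
          disjoint_filter_filter (hch_disj J hJ K hK hne'))
      rw [hsplit, Nat.cast_sum]
      have h1 : ∀ J ∈ children, (((J.filter fun v => c v = t)).card : ZMod 2)
          = (if t = aJ J then 1 else 0) + (J.card : ℕ) + 1 := by
        intro J hJ
        rw [hfilter J hJ J subset_rfl t]
        exact ((hcol J (aJ J)) hJ).1 t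
      rw [Finset.sum_congr rfl h1, Finset.sum_add_distrib, Finset.sum_add_distrib,
        Finset.sum_const]
      have h2 : ∑ J ∈ children, ((J.card : ℕ) : ZMod 2) = ((U.card : ℕ) : ZMod 2) := by
        rw [← Nat.cast_sum, hch_card]
      have h3 : ∑ J ∈ children, (if t = aJ J then (1 : ZMod 2) else 0)
          = (if t = s0 then 1 else 0) + ((m - 1 : ℕ) : ZMod 2) * (if t = t0 then 1 else 0) := by
        rw [← Finset.add_sum_erase _ _ hJ0]
        congr 1
        · simp [haJ]
        · have hall : ∀ J ∈ children.erase J0,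
              (if t = aJ J then (1 : ZMod 2) else 0) = (if t = t0 then 1 else 0) := by
            intro J hJ
            rw [haJ]; simp only [if_neg (mem_erase.1 hJ).1]
          rw [Finset.sum_congr rfl hall, Finset.sum_const, card_erase_of_mem hJ0,
            nsmul_eq_mul]
      rw [h2, h3, hmsub, nsmul_eq_mul, mul_one]
      rcases Nat.even_or_odd m with hev | hod
      · have hm0 : (m : ZMod 2) = 0 := (cast_eq_zero_iff_even m).2 hev
        have hs : s0 = a + 1 := by rw [hs0, if_pos hev]
        have ht : t0 = a + 2 := by rw [ht0, if_pos hev]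
        rw [hs, ht, hm0]
        have key : ∀ a t : Fin 3, (if t = a + 1 then (1 : ZMod 2) else 0)
            + (0 + 1) * (if t = a + 2 then 1 else 0) = (if t = a then 1 else 0) + 1 := by
          decide
        linear_combination key a t
      · have hm0 : (m : ZMod 2) = 1 := (cast_eq_one_iff_odd m).2 hod
        have hs : s0 = a := by rw [hs0, if_neg (Nat.not_even_iff_odd.2 hod)]
        have ht : t0 = a := by rw [ht0, if_neg (Nat.not_even_iff_odd.2 hod)]
        rw [hs, ht, hm0]
        have key : ∀ a t : Fin 3, (if t = a then (1 : ZMod 2) else 0)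
            + (1 + 1) * (if t = a then 1 else 0) + 1 = (if t = a then 1 else 0) + 1 := by
          decide
        linear_combination key a t
    refine ⟨c, hpar, fun I hI => ?_⟩
    by_cases hIU : I = U
    · rw [hIU]; exact good_of_target _ _ a hpar
    · have hIF' : I ∈ F' := mem_erase.2 ⟨hIU, hI⟩
      obtain ⟨J, hJM, hIJ⟩ := hcover I hIF'
      have hJch : J ∈ children := mem_union_left _ hJM
      obtain ⟨⟨t1, h1⟩, ⟨t2, h2⟩⟩ := ((hcol J (aJ J)) hJch).2 I hIF' hIJ
      exact ⟨⟨t1, by rw [hfilter J hJch I hIJ t1]; exact h1⟩,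
             ⟨t2, by rw [hfilter J hJch I hIJ t2]; exact h2⟩⟩

theorem stmt_12 {V : Type*} [Fintype V] [DecidableEq V] (F : Finset (Finset V))
    (hne : ∅ ∉ F)
    (hnested : ∀ I ∈ F, ∀ J ∈ F, (I ∩ J).Nonempty → I ⊆ J ∨ J ⊆ I) :
    ∃ c : V → Fin 3, ∀ I ∈ F,
      (∃ t, Odd ((I.filter fun v => c v = t).card)) ∧
      (∃ t, Even ((I.filter fun v => c v = t).card)) := by
  by_cases hV : (Finset.univ : Finset V).Nonempty
  · obtain ⟨c, _, hgood⟩ := key Finset.univ.card Finset.univ rfl hV F hne hnested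
      (fun I _ => Finset.subset_univ I) 0
    exact ⟨c, hgood⟩
  · refine ⟨fun _ => 0, fun I hI => absurd hI ?_⟩
    have : I = ∅ := eq_empty_of_forall_notMem
      (fun x hx => hV ⟨x, mem_univ x⟩)
    rw [this]; exact hne
end

section
/- For every positive integer k, the graph G_k defined as the bipartite graph with parts A = {1,...,2^k} and B consisting of one vertex v_I for each nonempty subinterval I of A (with v_I adjacent exactly to the integers in I) satisfies: every proper odd coloring of G_k uses at least k+2 colors. -/
/-- The bipartite graph `G_k`: one side is `{1,…,2^k}` (modeled by `Fin (2^k)`), the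
other side has a vertex for each nonempty interval `[a,b]`, adjacent exactly
to the elements of that interval. -/
def intervalGraph (k : ℕ) :
    SimpleGraph (Fin (2^k) ⊕ {p : Fin (2^k) × Fin (2^k) // p.1 ≤ p.2}) :=
  SimpleGraph.fromRel (fun u w =>
    ∃ (x : Fin (2^k)) (p : {p : Fin (2^k) × Fin (2^k) // p.1 ≤ p.2}),
      u = Sum.inl x ∧ w = Sum.inr p ∧ p.1.1 ≤ x ∧ x ≤ p.1.2)

/-! Read the colours of `1, …, 2^k` as a word. The parity vectors of the colour counts in its
`2^k + 1` prefixes are pairwise distinct: the interval vertex `[i+1, j]` sees some colour an odd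
number of times, so the prefixes of lengths `i` and `j` differ in that colour. Hence at least
`k + 1` colours occur on `A`, and the vertex of the whole interval, adjacent to all of `A`, needs
one more. -/

open Finset

section OddWords

variable {α : Type*} [DecidableEq α]

def prefixParity (f : ℕ → α) (i : ℕ) (t : α) : ZMod 2 :=
  #{x ∈ range i | f x = t}

lemma prefixParity_ne_of_odd {f : ℕ → α} {i j : ℕ} (hij : i ≤ j) {t : α}
    (hodd : Odd #{x ∈ Ico i j | f x = t}) : prefixParity f i t ≠ prefixParity f j t := by
  have hsplit : prefixParity f j t = prefixParity f i t + 1 := by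
    rw [← ZMod.natCast_eq_one_iff_odd.2 hodd, prefixParity, prefixParity]
    simp only [natCast_card_filter, sum_range_add_sum_Ico _ hij]
  rw [hsplit]
  simp

theorem lt_two_pow_card_image_of_odd {f : ℕ → α} {n : ℕ}
    (hodd : ∀ i j, i < j → j ≤ n → ∃ t, Odd #{x ∈ Ico i j | f x = t}) :
    n < 2 ^ #((range n).image f) := by
  set S := (range n).image f
  let Φ : Fin (n + 1) → (S → ZMod 2) := fun i t ↦ prefixParity f i t
  have hΦ : Function.Injective Φ := by
    refine .of_lt_imp_ne fun i j hij hΦij ↦ ?_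
    obtain ⟨t, ht⟩ := hodd i j hij (Nat.lt_succ_iff.1 j.2)
    have htS : t ∈ S := by
      obtain ⟨x, hx⟩ := card_pos.1 ht.pos
      simp only [mem_filter, mem_Ico] at hx
      exact mem_image.2 ⟨x, mem_range.2 (by omega), hx.2⟩
    exact prefixParity_ne_of_odd hij.le ht (congrFun hΦij ⟨t, htS⟩)
  simpa [Fintype.card_fun, Nat.lt_succ_iff] using Fintype.card_le_of_injective Φ hΦ

end OddWords

section IntervalGraph

variable {k : ℕ} {α : Type*}

abbrev IntervalVertex (k : ℕ) := {p : Fin (2^k) × Fin (2^k) // p.1 ≤ p.2}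

noncomputable def fullInterval (k : ℕ) : IntervalVertex k := ⟨(⊥, ⊤), bot_le⟩

lemma intervalGraph_adj_inr_inl (p : IntervalVertex k) (x : Fin (2^k)) :
    (intervalGraph k).Adj (.inr p) (.inl x) ↔ p.1.1 ≤ x ∧ x ≤ p.1.2 := by
  simp only [intervalGraph, SimpleGraph.fromRel_adj]
  aesop

lemma intervalGraph_not_adj_inr_inr (p q : IntervalVertex k) :
    ¬ (intervalGraph k).Adj (.inr p) (.inr q) := by
  simp [intervalGraph]

-- `Fin.ofNat` reduces modulo `2^k`; only the values at `x < 2^k` matter.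
def leftColor (c : Fin (2^k) ⊕ IntervalVertex k → α) (x : ℕ) : α :=
  c (.inl (Fin.ofNat (2^k) x))

lemma nbrColorCount_inr [DecidableEq α] (c : Fin (2^k) ⊕ IntervalVertex k → α)
    (p : IntervalVertex k) (t : α) :
    nbrColorCount (intervalGraph k) c (.inr p) t
      = #{x ∈ Ico (p.1.1 : ℕ) (p.1.2 + 1) | leftColor c x = t} := by
  have hval {x : ℕ} (hx : x < p.1.2 + 1) : (Fin.ofNat (2^k) x : ℕ) = x :=
    Nat.mod_eq_of_lt (by omega)
  rw [nbrColorCount, ← Nat.card_eq_finsetCard]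
  symm
  refine Nat.card_eq_of_bijective (fun x ↦ ⟨.inl (Fin.ofNat (2^k) x), ?_, ?_⟩) ⟨?_, ?_⟩
  · obtain ⟨hx, -⟩ := mem_filter.1 x.2
    rw [mem_Ico] at hx
    rw [intervalGraph_adj_inr_inl, Fin.le_def, Fin.le_def, hval hx.2]
    omega
  · exact (mem_filter.1 x.2).2
  · intro x y hxy
    have hx := (mem_Ico.1 (mem_filter.1 x.2).1).2
    have hy := (mem_Ico.1 (mem_filter.1 y.2).1).2
    simp only [Subtype.mk.injEq, Sum.inl.injEq] at hxy
    exact Subtype.ext (by rw [← hval hx, ← hval hy, hxy])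
  · rintro ⟨v | q, hadj, hcv⟩
    · rw [intervalGraph_adj_inr_inl, Fin.le_def, Fin.le_def] at hadj
      refine ⟨⟨v, mem_filter.2 ⟨mem_Ico.2 ⟨hadj.1, by omega⟩, ?_⟩⟩, ?_⟩ <;>
        simp [leftColor, hcv]
    · exact absurd hadj (intervalGraph_not_adj_inr_inr p q)

lemma exists_odd_card_leftColor [DecidableEq α] (c : Fin (2^k) ⊕ IntervalVertex k → α)
    (hodd : oddColoring (intervalGraph k) c) {i j : ℕ} (hij : i < j) (hj : j ≤ 2^k) :
    ∃ t, Odd #{x ∈ Ico i j | leftColor c x = t} := by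
  let p : IntervalVertex k := ⟨(⟨i, by omega⟩, ⟨j - 1, by omega⟩), Fin.mk_le_mk.2 (by omega)⟩
  obtain ⟨t, ht⟩ := hodd (.inr p) ⟨.inl p.1.1, (intervalGraph_adj_inr_inl p _).2 ⟨le_rfl, p.2⟩⟩
  rw [nbrColorCount_inr] at ht
  exact ⟨t, by simpa [p, Nat.sub_add_cancel (by omega : 1 ≤ j)] using ht⟩

lemma color_fullInterval_notMem_image_leftColor [DecidableEq α] (c : Fin (2^k) ⊕ IntervalVertex k → α)
    (hc : properColoring (intervalGraph k) c) :
    c (.inr (fullInterval k)) ∉ (range (2^k)).image (leftColor c) := by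
  simp only [mem_image, mem_range, not_exists, not_and]
  intro x _ hx
  exact hc ((intervalGraph_adj_inr_inl _ _).2 ⟨bot_le, le_top⟩) hx.symm

end IntervalGraph

theorem stmt_13_general (k : ℕ) (N : ℕ)
    (c : Fin (2^k) ⊕ {p : Fin (2^k) × Fin (2^k) // p.1 ≤ p.2} → Fin N)
    (hc : properColoring (intervalGraph k) c)
    (hodd : oddColoring (intervalGraph k) c) :
    k + 2 ≤ N := by
  set S := (range (2^k)).image (leftColor c)
  have hS : k < #S := (Nat.pow_lt_pow_iff_right one_lt_two).1 <|
    lt_two_pow_card_image_of_odd fun _ _ ↦ exists_odd_card_leftColor c hodd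
  calc k + 2 ≤ #(insert (c (.inr (fullInterval k))) S) := by
        rw [card_insert_of_notMem (color_fullInterval_notMem_image_leftColor c hc)]
        exact Nat.succ_le_succ hS
    _ ≤ N := (card_le_univ _).trans_eq (Fintype.card_fin N)

theorem stmt_13 (k : ℕ) (hk : 1 ≤ k) (N : ℕ)
    (c : Fin (2^k) ⊕ {p : Fin (2^k) × Fin (2^k) // p.1 ≤ p.2} → Fin N)
    (hc : properColoring (intervalGraph k) c)
    (hodd : oddColoring (intervalGraph k) c) :
    k + 2 ≤ N :=
  stmt_13_general k N c hc hodd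
end

section
/- For every positive integer k, the graph G_k (bipartite with parts A = {1,...,2^k} and one vertex in B for each nonempty interval of A, adjacent exactly to the elements of that interval) admits a proper conflict-free coloring with k+2 colors in which only k+1 colors are used on A. -/
/-!
Color `a ∈ A = {1, …, 2^k}` by its 2-adic valuation, a number in `{0, …, k}` (the ruler
sequence). Between two positive integers of the same valuation `j` lies a multiple of `2^(j+1)`,
so in every interval the maximal valuation is attained exactly once; this gives each interval
vertex a uniquely occurring color. A singleton interval `{a}` gets a color in `{0, 1}` different
from that of `a`, every other interval the extra color `k + 1`, so `a` sees the color of `{a}`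
exactly once.
-/

theorem exists_padicValNat_two_lt_of_eq {x y : ℕ} (hx : 0 < x) (hxy : x < y)
    (h : padicValNat 2 y = padicValNat 2 x) :
    ∃ n, x < n ∧ n < y ∧ padicValNat 2 x < padicValNat 2 n := by
  obtain ⟨j, hj⟩ : ∃ j, padicValNat 2 x = j := ⟨_, rfl⟩
  rw [hj]; rw [hj] at h
  have ho := pow_succ_padicValNat_not_dvd (p := 2) hx.ne'
  obtain ⟨o, rfl⟩ : 2 ^ j ∣ x := hj ▸ pow_padicValNat_dvd
  obtain ⟨o', rfl⟩ : 2 ^ j ∣ y := h ▸ pow_padicValNat_dvd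
  replace ho : ¬ 2 ∣ o := fun ⟨m, hm⟩ ↦ ho ⟨m, by rw [hj, hm, pow_succ]; ring⟩
  obtain ⟨m, rfl⟩ : ∃ m, o = 2 * m + 1 := ⟨o / 2, by omega⟩
  have hoo' : 2 * m + 1 < o' := Nat.lt_of_mul_lt_mul_left hxy
  have hval : j + 1 ≤ padicValNat 2 (2 ^ j * (2 * m + 2)) :=
    (padicValNat_dvd_iff_le (by positivity)).mp ⟨m + 1, by ring⟩
  refine ⟨2 ^ j * (2 * m + 2), by gcongr; omega, ?_, by omega⟩
  refine lt_of_le_of_ne (Nat.mul_le_mul_left _ hoo') fun heq ↦ ?_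
  rw [heq, h] at hval
  omega

theorem exists_unique_max_padicValNat_two {a b : ℕ} (ha : 0 < a) (hab : a ≤ b) :
    ∃ m ∈ Finset.Icc a b, ∀ x ∈ Finset.Icc a b, x ≠ m → padicValNat 2 x < padicValNat 2 m := by
  obtain ⟨m, hm, hmax⟩ := Finset.exists_max_image (Finset.Icc a b) (padicValNat 2)
    ⟨a, Finset.left_mem_Icc.mpr hab⟩
  refine ⟨m, hm, fun x hx hxm ↦ (hmax x hx).lt_of_ne fun heq ↦ ?_⟩
  simp only [Finset.mem_Icc] at hm hx
  rcases hxm.lt_or_gt with hlt | hlt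
  · obtain ⟨n, hxn, hnm, hn⟩ := exists_padicValNat_two_lt_of_eq (by omega) hlt heq.symm
    exact (hmax n (Finset.mem_Icc.mpr ⟨by omega, by omega⟩)).not_gt (heq ▸ hn)
  · obtain ⟨n, hmn, hnx, hn⟩ := exists_padicValNat_two_lt_of_eq (by omega) hlt heq
    exact (hmax n (Finset.mem_Icc.mpr ⟨by omega, by omega⟩)).not_gt hn

theorem padicValNat_lt_of_lt_pow {p n k : ℕ} (hn : n ≠ 0) (h : n < p ^ k) :
    padicValNat p n < k :=
  (padicValNat_le_nat_log n).trans_lt (Nat.log_lt_of_lt_pow hn h)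

theorem nbrColorCount_eq_one_iff {V α : Type*} (G : SimpleGraph V) (c : V → α) (v : V) (t : α) :
    nbrColorCount G c v t = 1 ↔
      ∃ w, G.Adj v w ∧ c w = t ∧ ∀ w', G.Adj v w' → c w' = t → w' = w := by
  rw [nbrColorCount, Nat.card_eq_one_iff_exists]
  constructor
  · rintro ⟨⟨w, hw, hwt⟩, huniq⟩
    exact ⟨w, hw, hwt, fun w' hw' hw't ↦ congrArg Subtype.val (huniq ⟨w', hw', hw't⟩)⟩
  · rintro ⟨w, hw, hwt, huniq⟩
    exact ⟨⟨w, hw, hwt⟩, fun ⟨w', hw', hw't⟩ ↦ Subtype.ext (huniq w' hw' hw't)⟩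

namespace intervalGraph

variable {k : ℕ}

abbrev Interval (k : ℕ) := {p : Fin (2^k) × Fin (2^k) // p.1 ≤ p.2}

theorem adj_inl_inr {x : Fin (2^k)} {p : Interval k} :
    (intervalGraph k).Adj (Sum.inl x) (Sum.inr p) ↔ p.1.1 ≤ x ∧ x ≤ p.1.2 := by
  simp only [intervalGraph, SimpleGraph.fromRel_adj, ne_eq, reduceCtorEq, not_false_eq_true,
    Sum.inl.injEq, Sum.inr.injEq, false_and, exists_false, or_false, true_and,
    exists_eq_left', exists_and_left]

theorem adj_inr_inl {x : Fin (2^k)} {p : Interval k} :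
    (intervalGraph k).Adj (Sum.inr p) (Sum.inl x) ↔ p.1.1 ≤ x ∧ x ≤ p.1.2 := by
  rw [SimpleGraph.adj_comm, adj_inl_inr]

theorem not_adj_inl_inl {x y : Fin (2^k)} : ¬ (intervalGraph k).Adj (Sum.inl x) (Sum.inl y) := by
  simp [intervalGraph]

theorem not_adj_inr_inr {p q : Interval k} : ¬ (intervalGraph k).Adj (Sum.inr p) (Sum.inr q) := by
  simp [intervalGraph]

/-- `x : Fin (2^k)` stands for the element `x + 1` of `A = {1, …, 2^k}`. -/
def rulerColor (x : Fin (2^k)) : Fin (k + 1) :=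
  ⟨padicValNat 2 (x + 1), padicValNat_lt_of_lt_pow (by omega) (by rw [pow_succ]; omega)⟩

theorem exists_unique_max_rulerColor (p : Interval k) :
    ∃ m, p.1.1 ≤ m ∧ m ≤ p.1.2 ∧
      ∀ x, p.1.1 ≤ x → x ≤ p.1.2 → x ≠ m → rulerColor x < rulerColor m := by
  obtain ⟨m, hm, hmax⟩ := exists_unique_max_padicValNat_two (a := p.1.1 + 1) (b := p.1.2 + 1)
    (by omega) (by have := p.2; simp only [Fin.le_def] at this; omega)
  have hm' := Finset.mem_Icc.mp hm
  refine ⟨⟨m - 1, by omega⟩, Fin.le_def.mpr (by dsimp; omega), Fin.le_def.mpr (by dsimp; omega),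
    fun x hx₁ hx₂ hxm ↦ Fin.lt_def.mpr ?_⟩
  dsimp only [rulerColor]
  rw [Fin.le_def] at hx₁ hx₂
  have := hmax (x + 1) (Finset.mem_Icc.mpr ⟨by omega, by omega⟩)
    (fun h ↦ hxm (Fin.ext (by dsimp; omega)))
  rwa [show m - 1 + 1 = m by omega]

def singleton (x : Fin (2^k)) : Interval k := ⟨(x, x), le_rfl⟩

def coloring (k : ℕ) : Fin (2^k) ⊕ Interval k → Fin (k + 2)
  | .inl x => (rulerColor x).castSucc
  | .inr p => if p.1.1 = p.1.2 then (if rulerColor p.1.1 = 0 then 1 else 0) else Fin.last (k + 1)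

theorem coloring_inl_ne_inr {x : Fin (2^k)} {p : Interval k} (h₁ : p.1.1 ≤ x) (h₂ : x ≤ p.1.2) :
    coloring k (.inl x) ≠ coloring k (.inr p) := by
  simp only [coloring]
  split_ifs with hp h0
  · rw [le_antisymm h₁ (hp ▸ h₂)] at h0
    simp [h0]
  · rw [le_antisymm h₁ (hp ▸ h₂)] at h0
    exact Fin.castSucc_ne_zero_iff.mpr h0
  · exact Fin.castSucc_ne_last _

theorem coloring_singleton_ne_last (hk : 1 ≤ k) (x : Fin (2^k)) :
    coloring k (.inr (singleton x)) ≠ Fin.last (k + 1) := by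
  dsimp only [coloring, singleton]
  rw [if_pos rfl]
  split_ifs
  · exact Fin.ne_of_val_ne (by rw [Fin.val_one, Fin.val_last]; omega)
  · exact Fin.ne_of_val_ne (by rw [Fin.val_zero, Fin.val_last]; omega)

theorem properColoring_coloring : properColoring (intervalGraph k) (coloring k) := by
  rintro (x | p) (y | q) h
  · exact absurd h not_adj_inl_inl
  · exact coloring_inl_ne_inr (adj_inl_inr.mp h).1 (adj_inl_inr.mp h).2
  · exact (coloring_inl_ne_inr (adj_inr_inl.mp h).1 (adj_inr_inl.mp h).2).symm
  · exact absurd h not_adj_inr_inr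

theorem conflictFree_coloring (hk : 1 ≤ k) : conflictFree (intervalGraph k) (coloring k) := by
  rintro (x | p) -
  · refine ⟨_, (nbrColorCount_eq_one_iff _ _ _ _).mpr
      ⟨.inr (singleton x), adj_inl_inr.mpr ⟨le_rfl, le_rfl⟩, rfl, ?_⟩⟩
    rintro (y | q) hadj hcol
    · exact absurd hadj not_adj_inl_inl
    obtain ⟨hq₁, hq₂⟩ := adj_inl_inr.mp hadj
    have hq : q.1.1 = q.1.2 := by
      by_contra hq
      exact coloring_singleton_ne_last hk x (by rw [← hcol]; simp [coloring, hq])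
    have hqx : q.1.1 = x := le_antisymm hq₁ (hq ▸ hq₂)
    exact congrArg Sum.inr (Subtype.ext (Prod.ext hqx (hq ▸ hqx)))
  · obtain ⟨m, hm₁, hm₂, hmax⟩ := exists_unique_max_rulerColor p
    refine ⟨_, (nbrColorCount_eq_one_iff _ _ _ _).mpr
      ⟨.inl m, adj_inr_inl.mpr ⟨hm₁, hm₂⟩, rfl, ?_⟩⟩
    rintro (y | q) hadj hcol
    · obtain ⟨hy₁, hy₂⟩ := adj_inr_inl.mp hadj
      by_contra hym
      exact (hmax y hy₁ hy₂ (by simpa using hym)).ne (Fin.castSucc_injective _ hcol)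
    · exact absurd hadj not_adj_inr_inr

theorem card_image_coloring_inl_le :
    (Finset.univ.image fun x : Fin (2^k) ↦ coloring k (.inl x)).card ≤ k + 1 := by
  calc (Finset.univ.image fun x : Fin (2^k) ↦ coloring k (.inl x)).card
      = ((Finset.univ.image rulerColor).image Fin.castSucc).card := by
        rw [Finset.image_image]; rfl
    _ ≤ (Finset.univ.image rulerColor).card := Finset.card_image_le
    _ ≤ k + 1 := (Finset.card_le_univ _).trans_eq (Fintype.card_fin _)

end intervalGraph

theorem stmt_14 (k : ℕ) (hk : 1 ≤ k) :
    ∃ c : Fin (2^k) ⊕ {p : Fin (2^k) × Fin (2^k) // p.1 ≤ p.2} → Fin (k + 2),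
      properColoring (intervalGraph k) c ∧ conflictFree (intervalGraph k) c ∧
      (Finset.univ.image (fun x : Fin (2^k) => c (Sum.inl x))).card ≤ k + 1 :=
  ⟨intervalGraph.coloring k, intervalGraph.properColoring_coloring,
    intervalGraph.conflictFree_coloring hk, intervalGraph.card_image_coloring_inl_le⟩
end

section
/- For every n ≥ 2, the cocktail party graph CP_n (the complete graph on 2n vertices minus a perfect matching) satisfies χ_o(CP_n) ≥ n + 2, while χ(CP_n) = n. -/
/-- The cocktail party graph on `{0,…,2n-1}`: the complete graph minus the
perfect matching of pairs `{2t, 2t+1}`. -/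
def cocktailParty (n : ℕ) : SimpleGraph (Fin (2*n)) :=
  SimpleGraph.fromRel (fun i j => (i : ℕ) / 2 ≠ (j : ℕ) / 2)

section aux
variable {n : ℕ}

/-- partner of a vertex in the matching -/
def ptn (v : Fin (2*n)) : Fin (2*n) :=
  ⟨if (v : ℕ) % 2 = 0 then (v : ℕ) + 1 else (v : ℕ) - 1, by
    have := v.isLt; split <;> omega⟩

lemma ptn_val (v : Fin (2*n)) :
    ((ptn v : Fin (2*n)) : ℕ) = if (v : ℕ) % 2 = 0 then (v : ℕ) + 1 else (v : ℕ) - 1 := rfl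

lemma ptn_div (v : Fin (2*n)) : ((ptn v : Fin (2*n)) : ℕ) / 2 = (v : ℕ) / 2 := by
  rw [ptn_val]; split <;> omega

lemma ptn_ne (v : Fin (2*n)) : ptn v ≠ v := by
  intro h
  have := congrArg Fin.val h
  rw [ptn_val] at this; split at this <;> omega

lemma ptn_ptn (v : Fin (2*n)) : ptn (ptn v) = v := by
  apply Fin.ext
  rw [ptn_val, ptn_val]
  by_cases h : (v : ℕ) % 2 = 0
  · rw [if_pos h, if_neg (by omega)]
    omega
  · rw [if_neg h, if_pos (by omega)]
    omega

lemma eq_ptn_of_div_eq {u v : Fin (2*n)} (hne : u ≠ v) (h : (u : ℕ)/2 = (v : ℕ)/2) :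
    u = ptn v := by
  apply Fin.ext
  have hne' : (u : ℕ) ≠ (v : ℕ) := fun hc => hne (Fin.ext hc)
  rw [ptn_val]; split <;> omega

lemma cp_adj {u v : Fin (2*n)} :
    (cocktailParty n).Adj u v ↔ (u : ℕ)/2 ≠ (v : ℕ)/2 := by
  simp only [cocktailParty, SimpleGraph.fromRel_adj]
  constructor
  · rintro ⟨-, h | h⟩ <;> omega
  · intro h
    exact ⟨fun hc => h (by rw [hc]), Or.inl h⟩

lemma cp_adj' {u v : Fin (2*n)} :
    (cocktailParty n).Adj v u ↔ u ≠ v ∧ u ≠ ptn v := by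
  rw [cp_adj]
  constructor
  · intro h
    refine ⟨fun hc => h (by rw [hc]), fun hc => ?_⟩
    rw [hc, ptn_div] at h; exact h rfl
  · rintro ⟨h1, h2⟩ hc
    exact h2 (eq_ptn_of_div_eq h1 hc.symm)

end aux

section main
open Finset Classical
variable {n N : ℕ} {c : Fin (2*n) → Fin N}

lemma nbr_eq (v : Fin (2*n)) (t : Fin N) :
    nbrColorCount (cocktailParty n) c v t
      = (Finset.univ.filter (fun x => (cocktailParty n).Adj v x ∧ c x = t)).card := by
  rw [nbrColorCount, Nat.card_eq_fintype_card, Fintype.card_subtype]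

lemma same_color (hp : properColoring (cocktailParty n) c) {u v : Fin (2*n)}
    (h : c u = c v) (hne : u ≠ v) : v = ptn u := by
  have hna : ¬ (cocktailParty n).Adj u v := fun ha => hp ha h
  rw [cp_adj] at hna
  exact eq_ptn_of_div_eq (Ne.symm hne) (by omega)

lemma cnt_le_two (hp : properColoring (cocktailParty n) c) (t : Fin N) :
    (Finset.univ.filter (fun x => c x = t)).card ≤ 2 := by
  by_cases hA : (Finset.univ.filter (fun x => c x = t)).Nonempty
  · obtain ⟨w, hw⟩ := hA
    rw [Finset.mem_filter] at hw
    have hsub : Finset.univ.filter (fun x => c x = t) ⊆ {w, ptn w} := by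
      intro x hx
      rw [Finset.mem_filter] at hx
      rcases eq_or_ne x w with rfl | hne
      · simp
      · have := same_color hp (hw.2.trans hx.2.symm) (Ne.symm hne)
        simp [this]
    calc (Finset.univ.filter (fun x => c x = t)).card
        ≤ ({w, ptn w} : Finset (Fin (2*n))).card := Finset.card_le_card hsub
      _ ≤ 2 := Finset.card_insert_le _ _ |>.trans (by simp)
  · rw [Finset.not_nonempty_iff_eq_empty] at hA
    simp [hA]

lemma odd_witness (hp : properColoring (cocktailParty n) c) {v : Fin (2*n)} {t : Fin N}
    (h : Odd (nbrColorCount (cocktailParty n) c v t)) :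
    ∃ w : Fin (2*n), w ≠ v ∧ w ≠ ptn v ∧
      Finset.univ.filter (fun x => c x = t) = {w} := by
  rw [nbr_eq] at h
  set B := Finset.univ.filter (fun x => (cocktailParty n).Adj v x ∧ c x = t) with hB
  have hBne : B.Nonempty := Finset.card_pos.mp h.pos
  obtain ⟨w, hw⟩ := hBne
  rw [hB, Finset.mem_filter] at hw
  obtain ⟨-, hadj, hcw⟩ := hw
  rw [cp_adj'] at hadj
  refine ⟨w, hadj.1, hadj.2, ?_⟩
  have hpw_ne_v : ptn w ≠ v := fun hc => hadj.2 (by rw [← hc, ptn_ptn])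
  have hpw_ne_pv : ptn w ≠ ptn v := fun hc => hadj.1 (by
    have := congrArg ptn hc; rwa [ptn_ptn, ptn_ptn] at this)
  have hwB : w ∈ B := by
    rw [hB, Finset.mem_filter, cp_adj']
    exact ⟨Finset.mem_univ _, ⟨hadj.1, hadj.2⟩, hcw⟩
  by_cases hpwA : c (ptn w) = t
  · exfalso
    have hpwB : ptn w ∈ B := by
      rw [hB, Finset.mem_filter, cp_adj']
      exact ⟨Finset.mem_univ _, ⟨hpw_ne_v, hpw_ne_pv⟩, hpwA⟩
    have hBsub : B ⊆ {w, ptn w} := by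
      intro x hx
      rw [hB, Finset.mem_filter] at hx
      rcases eq_or_ne x w with rfl | hne
      · simp
      · have := same_color hp (hcw.trans hx.2.2.symm) (Ne.symm hne)
        simp [this]
    have hBeq : B = {w, ptn w} := by
      apply Finset.Subset.antisymm hBsub
      intro x hx
      simp only [Finset.mem_insert, Finset.mem_singleton] at hx
      rcases hx with rfl | rfl
      · exact hwB
      · exact hpwB
    rw [hBeq, Finset.card_insert_of_notMem (by simp [Ne.symm (ptn_ne w)]),
      Finset.card_singleton] at h
    simp [Nat.odd_iff] at h
  · ext x
    simp only [Finset.mem_filter, Finset.mem_univ, true_and, Finset.mem_singleton]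
    constructor
    · intro hx
      by_contra hne
      have := same_color hp (hcw.trans hx.symm) (Ne.symm hne)
      rw [this] at hx
      exact hpwA hx
    · rintro rfl; exact hcw

lemma ptn_singleton (hp : properColoring (cocktailParty n) c) {w : Fin (2*n)}
    (h : Finset.univ.filter (fun x => c x = c w) = {w}) :
    Finset.univ.filter (fun x => c x = c (ptn w)) = {ptn w} := by
  ext x
  simp only [Finset.mem_filter, Finset.mem_univ, true_and, Finset.mem_singleton]
  constructor
  · intro hx
    by_contra hne
    have h2 : ptn w = ptn x := same_color hp hx hne
    have h3 : w = x := by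
      have := congrArg ptn h2; rwa [ptn_ptn, ptn_ptn] at this
    rw [← h3] at hx
    have : ptn w ∈ Finset.univ.filter (fun x => c x = c w) := by
      simp [hx.symm]
    rw [h, Finset.mem_singleton] at this
    exact ptn_ne w this
  · rintro rfl; rfl

end main

theorem stmt_16 (n : ℕ) (hn : 2 ≤ n) :
    (∀ (N : ℕ) (c : Fin (2*n) → Fin N),
      properColoring (cocktailParty n) c → oddColoring (cocktailParty n) c →
      n + 2 ≤ N) ∧
    (cocktailParty n).chromaticNumber = n := by
  constructor
  · intro N c hp ho
    classical
    have h2n : 0 < 2*n := by omega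
    set v0 : Fin (2*n) := ⟨0, by omega⟩ with hv0
    have hadj0 : (cocktailParty n).Adj v0 ⟨2, by omega⟩ := by
      rw [cp_adj]; simp [hv0]
    obtain ⟨t1, ht1⟩ := ho v0 ⟨_, hadj0⟩
    obtain ⟨w1, hw1v, hw1pv, hA1⟩ := odd_witness hp ht1
    have hcw1 : c w1 = t1 := by
      have : w1 ∈ Finset.univ.filter (fun x => c x = t1) := by rw [hA1]; simp
      simpa using this
    have hadjw1 : (cocktailParty n).Adj w1 v0 := by
      rw [cp_adj']
      exact ⟨Ne.symm hw1v, fun hc => hw1pv (hc ▸ (ptn_ptn w1).symm)⟩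
    obtain ⟨t3, ht3⟩ := ho w1 ⟨_, hadjw1⟩
    obtain ⟨w3, hw31, hw3p1, hA3⟩ := odd_witness hp ht3
    have hcw3 : c w3 = t3 := by
      have : w3 ∈ Finset.univ.filter (fun x => c x = t3) := by rw [hA3]; simp
      simpa using this
    rw [← hcw1] at hA1
    rw [← hcw3] at hA3
    have hA2 := ptn_singleton hp hA1
    have hA4 := ptn_singleton hp hA3
    have hdist : ∀ (a b : Fin (2*n)),
        Finset.univ.filter (fun x => c x = c a) = {a} →
        Finset.univ.filter (fun x => c x = c b) = {b} → a ≠ b → c a ≠ c b := by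
      intro a b ha hb hne hcc
      have : a ∈ Finset.univ.filter (fun x => c x = c b) := by simp [hcc]
      rw [hb, Finset.mem_singleton] at this
      exact hne this
    have d12 : w1 ≠ ptn w1 := (ptn_ne w1).symm
    have d13 : w1 ≠ w3 := Ne.symm hw31
    have d14 : w1 ≠ ptn w3 := fun h => hw3p1 (by rw [← ptn_ptn w3, ← h])
    have d23 : ptn w1 ≠ w3 := Ne.symm hw3p1
    have d24 : ptn w1 ≠ ptn w3 := fun h => hw31 (by
      have h2 := congrArg ptn h
      rw [ptn_ptn, ptn_ptn] at h2
      exact h2.symm)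
    have d34 : w3 ≠ ptn w3 := (ptn_ne w3).symm
    have c12 := hdist _ _ hA1 hA2 d12
    have c13 := hdist _ _ hA1 hA3 d13
    have c14 := hdist _ _ hA1 hA4 d14
    have c23 := hdist _ _ hA2 hA3 d23
    have c24 := hdist _ _ hA2 hA4 d24
    have c34 := hdist _ _ hA3 hA4 d34
    set T : Finset (Fin N) := {c w1, c (ptn w1), c w3, c (ptn w3)} with hT
    have hTcard : T.card = 4 := by
      rw [hT, Finset.card_insert_of_notMem (by simp [c12, c13, c14]),
        Finset.card_insert_of_notMem (by simp [c23, c24]),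
        Finset.card_insert_of_notMem (by simp [c34]), Finset.card_singleton]
    have hcnt1 : ∀ t ∈ T, (Finset.univ.filter (fun x => c x = t)).card = 1 := by
      intro t ht
      rw [hT] at ht
      simp only [Finset.mem_insert, Finset.mem_singleton] at ht
      rcases ht with rfl | rfl | rfl | rfl
      · rw [hA1]; simp
      · rw [hA2]; simp
      · rw [hA3]; simp
      · rw [hA4]; simp
    have hsum : ∑ t : Fin N, (Finset.univ.filter (fun x => c x = t)).card = 2*n := by
      rw [← Finset.card_eq_sum_card_fiberwise (fun x _ => Finset.mem_univ (c x))]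
      simp
    have hsplit := Finset.sum_sdiff (f := fun t => (Finset.univ.filter (fun x => c x = t)).card)
      (Finset.subset_univ T)
    have hTsum : ∑ t ∈ T, (Finset.univ.filter (fun x => c x = t)).card = 4 := by
      rw [Finset.sum_congr rfl hcnt1, Finset.sum_const, hTcard]
      simp
    have hrest : ∑ t ∈ Finset.univ \ T, (Finset.univ.filter (fun x => c x = t)).card
        ≤ (Finset.univ \ T).card * 2 := by
      have := Finset.sum_le_card_nsmul (Finset.univ \ T)
        (fun t => (Finset.univ.filter (fun x => c x = t)).card) 2
        (fun t _ => cnt_le_two hp t)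
      simpa using this
    have hcardsdiff : (Finset.univ \ T).card = N - 4 := by
      rw [Finset.card_sdiff_of_subset (Finset.subset_univ T), hTcard]
      simp
    have hN4 : 4 ≤ N := by
      have := Finset.card_le_univ T
      rw [hTcard] at this
      simpa using this
    rw [hsum, hTsum] at hsplit
    rw [hcardsdiff] at hrest
    beta_reduce at hsplit
    omega
  · apply le_antisymm
    · have hcol : (cocktailParty n).Colorable n := by
        refine ⟨SimpleGraph.Coloring.mk
          (fun v => ⟨(v : ℕ)/2, by have := v.isLt; omega⟩) ?_⟩
        intro u v huv hc
        rw [cp_adj] at huv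
        exact huv (congrArg Fin.val hc)
      exact hcol.chromaticNumber_le
    · have hinj : Function.Injective
          (fun i : Fin n => (⟨2*(i:ℕ), by have := i.isLt; omega⟩ : Fin (2*n))) := by
        intro i j h
        apply Fin.ext
        have := congrArg Fin.val h
        simpa using this
      set s : Finset (Fin (2*n)) :=
        Finset.image (fun i : Fin n => (⟨2*(i:ℕ), by have := i.isLt; omega⟩ : Fin (2*n)))
          Finset.univ with hs
      have hclique : (cocktailParty n).IsClique ↑s := by
        intro u hu v hv hne
        simp only [hs, Finset.coe_image, Set.mem_image, Finset.coe_univ, Set.mem_univ,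
          true_and] at hu hv
        obtain ⟨i, rfl⟩ := hu
        obtain ⟨j, rfl⟩ := hv
        rw [cp_adj]
        simp only [Nat.mul_div_cancel_left _ (by norm_num : 0 < 2)]
        intro hc
        exact hne (by simp [hc])
      have hcard : s.card = n := by
        rw [hs, Finset.card_image_of_injective _ hinj]
        simp
      have := hclique.card_le_chromaticNumber
      rwa [hcard] at this
end

section
/- Every biconvex bipartite graph G with bipartition (A, B) admits a proper conflict-free 6-coloring c such that at most 3 colors are used on A and at most 3 colors are used on B. -/
open Classical in
/-- Core combinatorial lemma: a family of nonempty sets indexed by a finite set of naturals,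
satisfying the sandwich property, admits a 3-coloring of points such that every member set
has a uniquely colored point. -/
lemma pcfCore {β : Type*} : ∀ (s : Finset ℕ) (N : ℕ → Set β),
    (∀ i ∈ s, (N i).Nonempty) →
    (∀ i ∈ s, ∀ j ∈ s, ∀ k ∈ s, i ≤ j → j ≤ k → N i ∩ N k ⊆ N j) →
    ∃ c : β → Fin 3,
      (∀ q : β, (∀ i ∈ s, q ∉ N i) → c q = 0) ∧
      (∀ m ∈ s, (∀ i ∈ s, m ≤ i) →
        ∃ x₀ ∈ N m, c x₀ ≠ 0 ∧ ∀ q ∈ N m, q ≠ x₀ → c q = 0) ∧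
      (∀ i ∈ s, ∃ p ∈ N i, ∀ q ∈ N i, c q = c p → q = p) := by
  intro s
  induction s using Finset.strongInduction with
  | _ s ih =>
  intro N hne hsand
  by_cases hs : s.Nonempty
  swap
  · refine ⟨fun _ => 0, fun _ _ => rfl, ?_, ?_⟩
    · intro m hm _; exact absurd ⟨m, hm⟩ hs
    · intro i hi; exact absurd ⟨i, hi⟩ hs
  obtain ⟨m, hm, hmin⟩ : ∃ m ∈ s, ∀ i ∈ s, m ≤ i :=
    ⟨s.min' hs, s.min'_mem hs, fun i hi => s.min'_le i hi⟩
  by_cases hcase : (N m ∩ N (s.max' hs)).Nonempty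
  · obtain ⟨x, hx⟩ := hcase
    have hxall : ∀ i ∈ s, x ∈ N i := fun i hi =>
      hsand m hm i hi (s.max' hs) (s.max'_mem hs) (hmin i hi) (s.le_max' i hi) hx
    refine ⟨fun q => if q = x then 1 else 0, ?_, ?_, ?_⟩
    · intro q hq
      have hqx : q ≠ x := fun h => hq m hm (h ▸ hx.1)
      simp [hqx]
    · intro m' hm' _
      refine ⟨x, hxall m' hm', by simp, fun q hq hqx => by simp [hqx]⟩
    · intro i hi
      refine ⟨x, hxall i hi, fun q hq hcq => ?_⟩
      by_contra h
      simp [h] at hcq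
  · -- recursive case
    have hNm : (N m).Nonempty := hne m hm
    set F := s.filter (fun j => (N m ∩ N j).Nonempty) with hF
    have hmF : m ∈ F := by
      refine Finset.mem_filter.mpr ⟨hm, ?_⟩
      obtain ⟨y, hy⟩ := hNm
      exact ⟨y, hy, hy⟩
    set J := F.max' ⟨m, hmF⟩ with hJ
    have hJF : J ∈ F := F.max'_mem ⟨m, hmF⟩
    have hJs : J ∈ s := (Finset.mem_filter.mp hJF).1
    have hJprop : (N m ∩ N J).Nonempty := (Finset.mem_filter.mp hJF).2
    have hF1 : ∀ j ∈ s, J < j → ∀ q : β, q ∈ N m → q ∉ N j := by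
      intro j hj hjj q hqm hqj
      have : j ∈ F := Finset.mem_filter.mpr ⟨hj, ⟨q, hqm, hqj⟩⟩
      exact absurd (F.le_max' j this) (by omega)
    set s' := s.filter (fun j => J < j) with hs'
    have hsub : s' ⊂ s := by
      refine Finset.ssubset_iff_of_subset (Finset.filter_subset _ _) |>.mpr ?_
      refine ⟨m, hm, ?_⟩
      simp only [hs', Finset.mem_filter]
      rintro ⟨-, h⟩
      exact absurd (hmin J hJs) (by omega)
    have hMs' : s.max' hs ∈ s' := by
      refine Finset.mem_filter.mpr ⟨s.max'_mem hs, ?_⟩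
      have h1 : J ≤ s.max' hs := s.le_max' J hJs
      rcases lt_or_eq_of_le h1 with h | h
      · exact h
      · exact absurd (h ▸ hJprop) hcase
    have hs'ne : s'.Nonempty := ⟨_, hMs'⟩
    obtain ⟨c', hd', hb', ha'⟩ := ih s' hsub N
      (fun i hi => hne i (Finset.filter_subset _ _ hi))
      (fun i hi j hj k hk hij hjk => hsand i (Finset.filter_subset _ _ hi) j
        (Finset.filter_subset _ _ hj) k (Finset.filter_subset _ _ hk) hij hjk)
    set m₁ := s'.min' hs'ne with hm₁
    have hm₁s' : m₁ ∈ s' := s'.min'_mem hs'ne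
    have hm₁s : m₁ ∈ s := Finset.filter_subset _ _ hm₁s'
    have hJm₁ : J < m₁ := (Finset.mem_filter.mp hm₁s').2
    obtain ⟨x₀, hx₀m, hx₀c, hx₀u⟩ := hb' m₁ hm₁s' (fun i hi => s'.min'_le i hi)
    obtain ⟨x, hxm, hxJ⟩ := hJprop
    have hxall : ∀ i ∈ s, i ≤ J → x ∈ N i := fun i hi hij =>
      hsand m hm i hi J hJs (hmin i hi) hij ⟨hxm, hxJ⟩
    have hxnot : ∀ j ∈ s, J < j → x ∉ N j := fun j hj hjj => hF1 j hj hjj x hxm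
    set χ : Fin 3 := if c' x₀ = 1 then 2 else 1 with hχ
    have hχ0 : χ ≠ 0 := by
      have : ∀ t : Fin 3, (if t = 1 then (2 : Fin 3) else 1) ≠ 0 := by decide
      exact this (c' x₀)
    have hχx₀ : χ ≠ c' x₀ := by
      have : ∀ t : Fin 3, t ≠ 0 → (if t = 1 then (2 : Fin 3) else 1) ≠ t := by decide
      exact this (c' x₀) hx₀c
    refine ⟨fun q => if q = x then χ else c' q, ?_, ?_, ?_⟩
    · intro q hq
      have hqx : q ≠ x := fun h => hq m hm (h ▸ hxm)
      simp only [hqx, if_false]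
      exact hd' q (fun i hi => hq i (Finset.filter_subset _ _ hi))
    · intro m' hm' hle
      have hm'm : m' = m := le_antisymm (hle m hm) (hmin m' hm')
      subst hm'm
      refine ⟨x, hxm, by simp [hχ0], fun q hq hqx => ?_⟩
      simp only [hqx, if_false]
      refine hd' q (fun i hi => ?_)
      exact fun hqi => hF1 i (Finset.filter_subset _ _ hi) (Finset.mem_filter.mp hi).2 q hq hqi
    · intro i hi
      by_cases hij : i ≤ J
      · refine ⟨x, hxall i hi hij, fun q hq hcq => ?_⟩
        by_contra hqx
        have hcq : c' q = χ := by simpa [hqx] using hcq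
        -- c' q = χ ≠ 0, so q is in some row of s'
        have hq' : ¬ (∀ j ∈ s', q ∉ N j) := by
          intro h
          exact hχ0 (by rw [← hcq]; exact hd' q h)
        push_neg at hq'
        obtain ⟨j, hj, hqj⟩ := hq'
        have hjs : j ∈ s := Finset.filter_subset _ _ hj
        have hJj : J < j := (Finset.mem_filter.mp hj).2
        have hqm₁ : q ∈ N m₁ :=
          hsand i hi m₁ hm₁s j hjs (by omega) (s'.min'_le j hj) ⟨hq, hqj⟩
        rcases eq_or_ne q x₀ with h | h
        · exact hχx₀ (by rw [← hcq, h])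
        · exact hχ0 (by rw [← hcq]; exact hx₀u q hqm₁ h)
      · have his' : i ∈ s' := Finset.mem_filter.mpr ⟨hi, by omega⟩
        obtain ⟨p, hp, hpu⟩ := ha' i his'
        have hpx : p ≠ x := fun h => hxnot i hi (by omega) (h ▸ hp)
        refine ⟨p, hp, fun q hq hcq => ?_⟩
        have hqx : q ≠ x := fun h => hxnot i hi (by omega) (h ▸ hq)
        have hcq : c' q = c' p := by simpa [hqx, hpx] using hcq
        exact hpu q hq hcq

open Classical in
/-- One-sided lemma: there is a 3-coloring such that every non-isolated vertex of `A`
has a neighbor whose color is unique among its neighbors. -/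
lemma pcfSide {V : Type*} (G : SimpleGraph V) (A B : Set V)
    (hdisj : Disjoint A B)
    (hbip : ∀ u v, G.Adj u v → (u ∈ A ∧ v ∈ B) ∨ (u ∈ B ∧ v ∈ A))
    (f : V → ℕ) (hinj : Set.InjOn f A)
    (hconv : ∀ w ∈ B, ∀ x ∈ A, ∀ y ∈ A, ∀ z ∈ A,
      G.Adj w x → G.Adj w z → f x ≤ f y → f y ≤ f z → G.Adj w y)
    (T : Finset V) (hT : ∀ a : V, a ∈ T ↔ (a ∈ A ∧ ∃ x, G.Adj a x)) :
    ∃ c : V → Fin 3, ∀ v ∈ A, (∃ x, G.Adj v x) →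
      ∃ p, G.Adj v p ∧ ∀ q, G.Adj v q → c q = c p → q = p := by
  set s : Finset ℕ := T.image f with hsdef
  set N : ℕ → Set V := fun i => {x | ∃ a ∈ A, f a = i ∧ G.Adj a x} with hN
  have hne : ∀ i ∈ s, (N i).Nonempty := by
    intro i hi
    obtain ⟨a, haT, hfa⟩ := Finset.mem_image.mp hi
    obtain ⟨haA, x, hadj⟩ := (hT a).mp haT
    exact ⟨x, ⟨a, haA, hfa, hadj⟩⟩
  have hsand : ∀ i ∈ s, ∀ j ∈ s, ∀ k ∈ s, i ≤ j → j ≤ k → N i ∩ N k ⊆ N j := by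
    intro i hi j hj k hk hij hjk q hq
    obtain ⟨⟨ai, haiA, hfi, hadji⟩, ⟨ak, hakA, hfk, hadjk⟩⟩ := hq
    obtain ⟨aj, hajT, hfj⟩ := Finset.mem_image.mp hj
    have hajA : aj ∈ A := ((hT aj).mp hajT).1
    have hqB : q ∈ B := by
      rcases hbip ai q hadji with h | h
      · exact h.2
      · exact absurd haiA (Set.disjoint_right.mp hdisj h.1)
    have := hconv q hqB ai haiA aj hajA ak hakA hadji.symm hadjk.symm
      (by rw [hfi, hfj]; exact hij) (by rw [hfj, hfk]; exact hjk)
    exact ⟨aj, hajA, hfj, this.symm⟩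
  obtain ⟨c, _, _, ha⟩ := pcfCore s N hne hsand
  refine ⟨c, fun v hv hex => ?_⟩
  have hvs : f v ∈ s := Finset.mem_image.mpr ⟨v, (hT v).mpr ⟨hv, hex⟩, rfl⟩
  have hNv : N (f v) = {q | G.Adj v q} := by
    ext q
    constructor
    · rintro ⟨a, haA, hfa, hadj⟩
      have : a = v := hinj haA hv hfa
      exact this ▸ hadj
    · intro hq
      exact ⟨v, hv, rfl, hq⟩
  obtain ⟨p, hp, hpu⟩ := ha (f v) hvs
  rw [hNv] at hp hpu
  exact ⟨p, hp, fun q hq => hpu q hq⟩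

theorem stmt_17 {V : Type*} [Fintype V] [DecidableEq V] (G : SimpleGraph V)
    (A B : Set V)
    (hpart : A ∪ B = Set.univ) (hdisj : Disjoint A B)
    (hbip : ∀ u v, G.Adj u v → (u ∈ A ∧ v ∈ B) ∨ (u ∈ B ∧ v ∈ A))
    -- biconvexity: a linear order on `A` (given by an injective ranking `fA`)
    -- in which every neighborhood of a vertex of `B` is an interval, and vice versa
    (hconvA : ∃ fA : V → ℕ, Set.InjOn fA A ∧ ∀ w ∈ B, ∀ x ∈ A, ∀ y ∈ A, ∀ z ∈ A,
      G.Adj w x → G.Adj w z → fA x ≤ fA y → fA y ≤ fA z → G.Adj w y)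
    (hconvB : ∃ fB : V → ℕ, Set.InjOn fB B ∧ ∀ w ∈ A, ∀ x ∈ B, ∀ y ∈ B, ∀ z ∈ B,
      G.Adj w x → G.Adj w z → fB x ≤ fB y → fB y ≤ fB z → G.Adj w y) :
    ∃ c : V → Fin 6, properColoring G c ∧ conflictFree G c ∧
      (c '' A).ncard ≤ 3 ∧ (c '' B).ncard ≤ 3 := by
  classical
  obtain ⟨fA, hfAi, hfAc⟩ := hconvA
  obtain ⟨fB, hfBi, hfBc⟩ := hconvB
  have hbip' : ∀ u v, G.Adj u v → (u ∈ B ∧ v ∈ A) ∨ (u ∈ A ∧ v ∈ B) :=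
    fun u v h => (hbip u v h).symm
  -- coloring serving A-vertices (lives on B = neighbors of A)
  obtain ⟨u1, hu1⟩ := pcfSide G A B hdisj hbip fA hfAi hfAc
    (Finset.univ.filter (fun a => a ∈ A ∧ ∃ x, G.Adj a x))
    (by intro a; simp)
  -- coloring serving B-vertices (lives on A)
  obtain ⟨u2, hu2⟩ := pcfSide G B A hdisj.symm hbip' fB hfBi hfBc
    (Finset.univ.filter (fun a => a ∈ B ∧ ∃ x, G.Adj a x))
    (by intro a; simp)
  set eA : Fin 3 → Fin 6 := fun i => ⟨i.val, by omega⟩ with heA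
  set eB : Fin 3 → Fin 6 := fun i => ⟨i.val + 3, by omega⟩ with heB
  set c : V → Fin 6 := fun v => if v ∈ A then eA (u2 v) else eB (u1 v) with hc
  have hmemB : ∀ v ∈ B, c v = eB (u1 v) := by
    intro v hv
    have : v ∉ A := Set.disjoint_right.mp hdisj hv
    simp [hc, this]
  have hmemA : ∀ v ∈ A, c v = eA (u2 v) := by
    intro v hv; simp [hc, hv]
  refine ⟨c, ?_, ?_, ?_, ?_⟩
  · -- proper
    intro u v hadj
    rcases hbip u v hadj with ⟨hu, hv⟩ | ⟨hu, hv⟩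
    · rw [hmemA u hu, hmemB v hv]
      intro h
      have := congrArg Fin.val h
      simp [heA, heB] at this
      omega
    · rw [hmemB u hu, hmemA v hv]
      intro h
      have := congrArg Fin.val h
      simp [heA, heB] at this
      omega
  · -- conflict-free
    intro v hex
    have hvAB : v ∈ A ∪ B := hpart ▸ Set.mem_univ v
    rcases hvAB with hv | hv
    · obtain ⟨p, hp, hpu⟩ := hu1 v hv hex
      refine ⟨c p, ?_⟩
      rw [nbrColorCount]
      rw [Nat.card_eq_one_iff_unique]
      have hqB : ∀ q, G.Adj v q → q ∈ B := by
        intro q hq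
        rcases hbip v q hq with h | h
        · exact h.2
        · exact absurd h.1 (Set.disjoint_left.mp hdisj hv)
      have key : ∀ q, G.Adj v q → c q = c p → q = p := by
        intro q hq hcq
        have h1 : c q = eB (u1 q) := hmemB q (hqB q hq)
        have h2 : c p = eB (u1 p) := hmemB p (hqB p hp)
        rw [h1, h2] at hcq
        have : u1 q = u1 p := by
          have := congrArg Fin.val hcq
          simp [heB] at this
          exact Fin.ext this
        exact hpu q hq this
      constructor
      · refine ⟨fun a b => ?_⟩
        obtain ⟨qa, hqa, hca⟩ := a
        obtain ⟨qb, hqb, hcb⟩ := b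
        exact Subtype.ext ((key qa hqa hca).trans (key qb hqb hcb).symm)
      · exact ⟨⟨p, hp, rfl⟩⟩
    · obtain ⟨p, hp, hpu⟩ := hu2 v hv hex
      refine ⟨c p, ?_⟩
      rw [nbrColorCount]
      rw [Nat.card_eq_one_iff_unique]
      have hqA : ∀ q, G.Adj v q → q ∈ A := by
        intro q hq
        rcases hbip v q hq with h | h
        · exact absurd h.1 (Set.disjoint_right.mp hdisj hv)
        · exact h.2
      have key : ∀ q, G.Adj v q → c q = c p → q = p := by
        intro q hq hcq
        have h1 : c q = eA (u2 q) := hmemA q (hqA q hq)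
        have h2 : c p = eA (u2 p) := hmemA p (hqA p hp)
        rw [h1, h2] at hcq
        have : u2 q = u2 p := by
          have := congrArg Fin.val hcq
          simp [heA] at this
          exact Fin.ext this
        exact hpu q hq this
      constructor
      · refine ⟨fun a b => ?_⟩
        obtain ⟨qa, hqa, hca⟩ := a
        obtain ⟨qb, hqb, hcb⟩ := b
        exact Subtype.ext ((key qa hqa hca).trans (key qb hqb hcb).symm)
      · exact ⟨⟨p, hp, rfl⟩⟩
  · -- ncard A
    have hsub : c '' A ⊆ eA '' Set.univ := by
      rintro _ ⟨v, hv, rfl⟩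
      exact ⟨u2 v, Set.mem_univ _, (hmemA v hv).symm⟩
    calc (c '' A).ncard ≤ (eA '' Set.univ).ncard :=
          Set.ncard_le_ncard hsub (Set.finite_univ.image _)
      _ ≤ (Set.univ : Set (Fin 3)).ncard := Set.ncard_image_le Set.finite_univ
      _ = 3 := by rw [Set.ncard_univ]; simp
  · -- ncard B
    have hsub : c '' B ⊆ eB '' Set.univ := by
      rintro _ ⟨v, hv, rfl⟩
      exact ⟨u1 v, Set.mem_univ _, (hmemB v hv).symm⟩
    calc (c '' B).ncard ≤ (eB '' Set.univ).ncard :=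
          Set.ncard_le_ncard hsub (Set.finite_univ.image _)
      _ ≤ (Set.univ : Set (Fin 3)).ncard := Set.ncard_image_le Set.finite_univ
      _ = 3 := by rw [Set.ncard_univ]; simp
end

section
/- Let G be a graph and suppose that for some t, every induced bipartite subgraph of G with bipartition (A, B) admits a proper conflict-free coloring c in which at most t colors are used on A and at most t colors are used on B. Then χ_pcf(G) ≤ t^2 · χ(G). -/
/-!
Fix a proper colouring `φ : V → Fin n`. If a vertex `v` has a neighbour coloured above `φ v`,
let `j` be the smallest such colour. The vertices with this "nearest colour above" equal to `j`
form an independent set `A j` disjoint from the colour class `φ⁻¹ {j}`: for adjacent `u, v ∈ A j`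
with `φ u < φ v`, the colour `φ v` lies strictly between `φ u` and `j`. So the bipartite
hypothesis for `(A j, φ⁻¹ {j})` yields a `t`-colouring `g j` of the class `φ⁻¹ {j}` under which
every vertex of `A j` has a neighbour in the class whose colour is unique there. Reversing the
order (nearest colour below) handles the remaining non-isolated vertices, and
`v ↦ (g↑ (φ v) v, g↓ (φ v) v, φ v)` is then a proper conflict-free colouring with `t * t * n`
colours.
-/

open OrderDual

section

variable {V α β ι : Type*} {G : SimpleGraph V}

theorem properColoring.comp {c : V → α} {f : α → β} (hc : properColoring G c)
    (hf : Function.Injective f) : properColoring G (f ∘ c) :=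
  fun _ _ h e => hc h (hf e)

theorem nbrColorCount_comp {c : V → α} {f : α → β} (hf : Function.Injective f) (v : V) (s : α) :
    nbrColorCount G (f ∘ c) v (f s) = nbrColorCount G c v s := by
  simp only [nbrColorCount, Function.comp_apply, hf.eq_iff]

theorem conflictFree.comp {c : V → α} {f : α → β} (hc : conflictFree G c)
    (hf : Function.Injective f) : conflictFree G (f ∘ c) := fun v hv => by
  obtain ⟨s, hs⟩ := hc v hv
  exact ⟨f s, (nbrColorCount_comp hf v s).trans hs⟩

def IsUniqueColorNbr (G : SimpleGraph V) (B : Set V) (g : V → α) (v x : V) : Prop :=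
  x ∈ B ∧ G.Adj v x ∧ ∀ y ∈ B, G.Adj v y → g y = g x → y = x

theorem IsUniqueColorNbr.univ_of_forall {γ : Type*} {B : Set V} {g : V → β} {c : V → γ} {v x : V}
    (hx : IsUniqueColorNbr G B g v x) (hc : ∀ y, c y = c x → y ∈ B ∧ g y = g x) :
    IsUniqueColorNbr G Set.univ c v x :=
  ⟨trivial, hx.2.1, fun y _ hvy hyx => (hc y hyx).elim (hx.2.2 y · hvy)⟩

theorem conflictFree_of_exists_isUniqueColorNbr {c : V → α}
    (h : ∀ v, (∃ x, G.Adj v x) → ∃ x, IsUniqueColorNbr G Set.univ c v x) : conflictFree G c :=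
  fun v hv => by
    obtain ⟨x, -, hvx, hx⟩ := h v hv
    refine ⟨c x, Nat.card_eq_one_iff_exists.2 ⟨⟨x, hvx, rfl⟩, fun ⟨y, hvy, hy⟩ => ?_⟩⟩
    exact Subtype.ext (hx y trivial hvy hy)

def InducedBipartitePCFColorable (G : SimpleGraph V) (t : ℕ) : Prop :=
  ∀ A B : Set V, Disjoint A B →
      (∀ u ∈ A, ∀ v ∈ A, ¬ G.Adj u v) → (∀ u ∈ B, ∀ v ∈ B, ¬ G.Adj u v) →
      ∃ c : V → ℕ,
        (∀ u ∈ A ∪ B, ∀ v ∈ A ∪ B, G.Adj u v → c u ≠ c v) ∧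
        (∀ v ∈ A ∪ B, (∃ x ∈ A ∪ B, G.Adj v x) →
          ∃ s, Nat.card {x // x ∈ A ∪ B ∧ G.Adj v x ∧ c x = s} = 1) ∧
        (c '' A).ncard ≤ t ∧ (c '' B).ncard ≤ t

namespace InducedBipartitePCFColorable

variable {t : ℕ}

theorem pos [Nonempty V] (hG : InducedBipartitePCFColorable G t) : 0 < t := by
  obtain ⟨v⟩ := ‹Nonempty V›
  obtain ⟨c, -, -, hc, -⟩ := hG {v} ∅ (Set.disjoint_empty _)
    (by rintro _ rfl _ rfl; exact G.loopless.irrefl _) (by simp)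
  exact (by simpa using hc : 1 ≤ t)

theorem exists_fin_isUniqueColorNbr [Finite V] [NeZero t] (hG : InducedBipartitePCFColorable G t)
    {A B : Set V} (hAB : Disjoint A B) (hA : G.IsIndepSet A) (hB : G.IsIndepSet B) :
    ∃ g : V → Fin t, ∀ v ∈ A, (∃ u ∈ B, G.Adj v u) → ∃ x, IsUniqueColorNbr G B g v x := by
  obtain ⟨c, -, hcf, -, hcB⟩ := hG A B hAB (fun u hu v hv h => hA hu hv (G.ne_of_adj h) h)
    (fun u hu v hv h => hB hu hv (G.ne_of_adj h) h)
  obtain ⟨f, -, hf⟩ : ∃ f : ℕ → Fin t, c '' B ⊆ f ⁻¹' Set.univ ∧ Set.InjOn f (c '' B) := by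
    refine (Set.toFinite _).exists_injOn_of_encard_le ?_
    rw [← (Set.toFinite _).cast_ncard_eq, Set.encard_univ, ENat.card_eq_coe_fintype_card,
      Fintype.card_fin]
    exact_mod_cast hcB
  refine ⟨f ∘ c, fun v hvA ⟨u, huB, hvu⟩ => ?_⟩
  obtain ⟨s, hs⟩ := hcf v (.inl hvA) ⟨u, .inr huB, hvu⟩
  obtain ⟨⟨x, hxAB, hvx, rfl⟩, hx⟩ := Nat.card_eq_one_iff_exists.1 hs
  have hxB : x ∈ B := hxAB.resolve_left fun hxA => hA hvA hxA (G.ne_of_adj hvx) hvx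
  refine ⟨x, hxB, hvx, fun y hyB hvy hyx => ?_⟩
  have hcyx : c y = c x := hf (Set.mem_image_of_mem c hyB) (Set.mem_image_of_mem c hxB) hyx
  exact congrArg Subtype.val (hx ⟨y, .inr hyB, hvy, hcyx⟩)

end InducedBipartitePCFColorable

section NearestAbove

variable [LinearOrder ι] {φ : V → ι}

def nearestAbove (G : SimpleGraph V) (φ : V → ι) (j : ι) : Set V :=
  {v | φ v < j ∧ (∃ u, G.Adj v u ∧ φ u = j) ∧ ∀ u, G.Adj v u → φ v < φ u → j ≤ φ u}

theorem isIndepSet_nearestAbove (hφ : properColoring G φ) (j : ι) :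
    G.IsIndepSet (nearestAbove G φ j) := by
  suffices ∀ u ∈ nearestAbove G φ j, ∀ v ∈ nearestAbove G φ j, G.Adj u v → ¬ φ u < φ v from
    fun u hu v hv _ h => (hφ h).lt_or_gt.elim (this u hu v hv h) (this v hv u hu h.symm)
  intro u hu v hv huv h
  exact (hu.2.2 v huv h).not_gt hv.1

theorem disjoint_nearestAbove_preimage (j : ι) : Disjoint (nearestAbove G φ j) (φ ⁻¹' {j}) :=
  Set.disjoint_left.2 fun _ hv (h : _ = j) => hv.1.ne h

theorem exists_mem_nearestAbove [Finite V] {v : V} (h : ∃ u, G.Adj v u ∧ φ v < φ u) :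
    ∃ j, v ∈ nearestAbove G φ j := by
  obtain ⟨u, ⟨hvu, hu⟩, hmin⟩ := Set.exists_min_image {u | G.Adj v u ∧ φ v < φ u} φ
    (Set.toFinite _) h
  exact ⟨φ u, hu, ⟨u, hvu, rfl⟩, fun w hvw hw => hmin w ⟨hvw, hw⟩⟩

theorem exists_mem_nearestAbove_or_dual [Finite V] (hφ : properColoring G φ) {v : V}
    (h : ∃ u, G.Adj v u) :
    ∃ j, v ∈ nearestAbove G φ j ∨ v ∈ nearestAbove G (toDual ∘ φ) (toDual j) := by
  obtain ⟨u, hvu⟩ := h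
  rcases (hφ hvu).lt_or_gt with hlt | hgt
  · obtain ⟨j, hj⟩ := exists_mem_nearestAbove ⟨u, hvu, hlt⟩
    exact ⟨j, .inl hj⟩
  · obtain ⟨j, hj⟩ := exists_mem_nearestAbove (φ := toDual ∘ φ) ⟨u, hvu, hgt⟩
    exact ⟨ofDual j, .inr hj⟩

theorem InducedBipartitePCFColorable.exists_nearestAbove_isUniqueColorNbr [Finite V] {t : ℕ}
    [NeZero t] (hG : InducedBipartitePCFColorable G t) (hφ : properColoring G φ) (j : ι) :
    ∃ g : V → Fin t, ∀ v ∈ nearestAbove G φ j, ∃ x, IsUniqueColorNbr G (φ ⁻¹' {j}) g v x := by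
  obtain ⟨g, hg⟩ := hG.exists_fin_isUniqueColorNbr (disjoint_nearestAbove_preimage j)
    (isIndepSet_nearestAbove hφ j) fun _ hu _ hv _ h => hφ h (hu.trans hv.symm)
  exact ⟨g, fun v hv => hg v hv (let ⟨u, hvu, hu⟩ := hv.2.1; ⟨u, hu, hvu⟩)⟩

theorem conflictFree_of_nearestAbove [Finite V] (hφ : properColoring G φ)
    (gUp : ι → V → β) (gDown : ιᵒᵈ → V → β)
    (hUp : ∀ j, ∀ v ∈ nearestAbove G φ j, ∃ x, IsUniqueColorNbr G (φ ⁻¹' {j}) (gUp j) v x)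
    (hDown : ∀ j, ∀ v ∈ nearestAbove G (toDual ∘ φ) j,
      ∃ x, IsUniqueColorNbr G ((toDual ∘ φ) ⁻¹' {j}) (gDown j) v x) :
    conflictFree G fun v => ((gUp (φ v) v, gDown (toDual (φ v)) v), φ v) := by
  refine conflictFree_of_exists_isUniqueColorNbr fun v hv => ?_
  obtain ⟨j, hj | hj⟩ := exists_mem_nearestAbove_or_dual hφ hv
  · obtain ⟨x, hx⟩ := hUp j v hj
    obtain rfl : φ x = j := hx.1
    refine ⟨x, hx.univ_of_forall fun y hyx => ?_⟩
    have hφyx : φ y = φ x := congrArg Prod.snd hyx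
    rw [hφyx] at hyx
    exact ⟨hφyx, congrArg (·.1.1) hyx⟩
  · obtain ⟨x, hx⟩ := hDown (toDual j) v hj
    obtain rfl : φ x = j := hx.1
    refine ⟨x, hx.univ_of_forall fun y hyx => ?_⟩
    have hφyx : φ y = φ x := congrArg Prod.snd hyx
    rw [hφyx] at hyx
    exact ⟨hφyx, congrArg (·.1.2) hyx⟩

end NearestAbove

end

theorem stmt_18_general {V : Type*} [Fintype V] (G : SimpleGraph V) (t : ℕ)
    (hbip : ∀ A B : Set V, Disjoint A B →
      (∀ u ∈ A, ∀ v ∈ A, ¬ G.Adj u v) → (∀ u ∈ B, ∀ v ∈ B, ¬ G.Adj u v) →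
      ∃ c : V → ℕ,
        -- proper on the induced subgraph on `A ∪ B`
        (∀ u ∈ A ∪ B, ∀ v ∈ A ∪ B, G.Adj u v → c u ≠ c v) ∧
        -- conflict-free on the induced subgraph on `A ∪ B`
        (∀ v ∈ A ∪ B, (∃ x ∈ A ∪ B, G.Adj v x) →
          ∃ s, Nat.card {x // x ∈ A ∪ B ∧ G.Adj v x ∧ c x = s} = 1) ∧
        (c '' A).ncard ≤ t ∧ (c '' B).ncard ≤ t)
    (n : ℕ) (hchi : G.Colorable n) :
    ∃ c : V → Fin (t * t * n), properColoring G c ∧ conflictFree G c := by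
  rcases isEmpty_or_nonempty V with hV | _
  · exact ⟨isEmptyElim, fun u => isEmptyElim u, fun v => isEmptyElim v⟩
  have hG : InducedBipartitePCFColorable G t := hbip
  have : NeZero t := ⟨hG.pos.ne'⟩
  obtain ⟨C⟩ := hchi
  have hC : properColoring G C := fun _ _ h => C.valid h
  choose gUp hUp using hG.exists_nearestAbove_isUniqueColorNbr hC
  choose gDown hDown using hG.exists_nearestAbove_isUniqueColorNbr (hC.comp toDual.injective)
  let e : (Fin t × Fin t) × Fin n ≃ Fin (t * t * n) :=
    (finProdFinEquiv.prodCongr (.refl _)).trans finProdFinEquiv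
  refine ⟨e ∘ fun v => ((gUp (C v) v, gDown (toDual (C v)) v), C v), ?_, ?_⟩
  · exact properColoring.comp (fun _ _ h hc => hC h (congrArg Prod.snd hc)) e.injective
  · exact (conflictFree_of_nearestAbove hC gUp gDown hUp hDown).comp e.injective

theorem stmt_18 {V : Type*} [Fintype V] [DecidableEq V] (G : SimpleGraph V) (t : ℕ)
    (hbip : ∀ A B : Set V, Disjoint A B →
      (∀ u ∈ A, ∀ v ∈ A, ¬ G.Adj u v) → (∀ u ∈ B, ∀ v ∈ B, ¬ G.Adj u v) →
      ∃ c : V → ℕ,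
        -- proper on the induced subgraph on `A ∪ B`
        (∀ u ∈ A ∪ B, ∀ v ∈ A ∪ B, G.Adj u v → c u ≠ c v) ∧
        -- conflict-free on the induced subgraph on `A ∪ B`
        (∀ v ∈ A ∪ B, (∃ x ∈ A ∪ B, G.Adj v x) →
          ∃ s, Nat.card {x // x ∈ A ∪ B ∧ G.Adj v x ∧ c x = s} = 1) ∧
        (c '' A).ncard ≤ t ∧ (c '' B).ncard ≤ t)
    (n : ℕ) (hchi : G.Colorable n) :
    ∃ c : V → Fin (t * t * n), properColoring G c ∧ conflictFree G c :=
  stmt_18_general G t hbip n hchi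
end

section
/- Let G be a claw-free graph with a proper coloring c using at most Δ(G)+6 colors, and let v be a vertex such that no vertex in the closed neighborhood N[v] is c-critical. Then every neighbor w of v with |W(c,w)| ≤ 4 has a c-safe color, i.e., there exists a color i not appearing on N[w] such that no neighbor x of w satisfies W(c,x) = {c(w), i}. -/
/-- A color `i` is `c`-safe for `w`: it does not appear on the closed neighborhood
of `w` and no neighbor `x` of `w` has witness set `{c w, i}`. -/
def isSafe {V : Type*} {α : Type*} (G : SimpleGraph V) (c : V → α) (w : V) (i : α) : Prop :=
  i ≠ c w ∧ (∀ x, G.Adj w x → c x ≠ i) ∧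
    (∀ x, G.Adj w x → witnessSet G c x ≠ {c w, i})

/-!
Let `I` be the set of colors on `N(w)`. Every color of `I` occurs at least twice on `N(w)` unless
it lies in `W(c,w)`, so `2|I| ≤ deg w + 4`. A color outside `{c(w)} ∪ I` can only be blocked by a
neighbour `x` of `w` with `W(c,x) = {c(w), i}`; such an `x` is critical (witnessed by `w` and a
neighbour of `x` colored `i`), hence lies outside `N[v]`. Two such witnesses of equal color would
form a claw with `v` at `w`, so there are at most `|I|` of these colors, and at most
`1 + 2|I| ≤ Δ + 5` colors are blocked in total.
-/

open Finset

theorem Finset.two_mul_card_image_le {ι α : Type*} [DecidableEq α] (s : Finset ι) (f : ι → α) :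
    2 * #(s.image f) ≤ #s + #{t ∈ s.image f | Odd #{x ∈ s | f x = t}} := by
  rw [card_eq_sum_card_image f s, card_filter, ← sum_add_distrib, mul_comm, ← smul_eq_mul,
    ← sum_const]
  refine sum_le_sum fun t ht => ?_
  obtain ⟨x, hx, rfl⟩ := mem_image.1 ht
  have hpos : 0 < #{y ∈ s | f y = f x} := card_pos.2 ⟨x, mem_filter.2 ⟨hx, rfl⟩⟩
  split_ifs with hodd
  · omega
  · obtain ⟨r, hr⟩ := Nat.not_odd_iff_even.1 hodd
    omega

section

variable {V α : Type*} (G : SimpleGraph V) (c : V → α)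

lemma nbrColorCount_eq_card [Fintype V] [DecidableRel G.Adj] [DecidableEq α] (u : V) (t : α) :
    nbrColorCount G c u t = #{x ∈ G.neighborFinset u | c x = t} := by
  rw [nbrColorCount, Nat.card_eq_fintype_card, Fintype.card_subtype,
    SimpleGraph.neighborFinset_eq_filter, filter_filter]

lemma witnessSet_eq_coe_filter [Fintype V] [DecidableRel G.Adj] [DecidableEq α] (u : V) :
    witnessSet G c u =
      ↑{t ∈ (G.neighborFinset u).image c | Odd #{x ∈ G.neighborFinset u | c x = t}} := by
  ext t
  simp only [witnessSet, Set.mem_ofPred_eq, nbrColorCount_eq_card, coe_filter, mem_image]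
  refine ⟨fun hodd => ⟨?_, hodd⟩, And.right⟩
  obtain ⟨x, hx⟩ := card_pos.1 hodd.pos
  exact ⟨x, (mem_filter.1 hx).1, (mem_filter.1 hx).2⟩

lemma two_mul_card_nbrColors_le [Fintype V] [DecidableRel G.Adj] [DecidableEq α] (u : V) :
    2 * #((G.neighborFinset u).image c) ≤ G.degree u + (witnessSet G c u).ncard := by
  rw [witnessSet_eq_coe_filter, Set.ncard_coe_finset, ← G.card_neighborFinset_eq_degree]
  exact two_mul_card_image_le _ c

variable {G c}

lemma isCritical_of_witnessSet_eq_pair {w x : V} {i : α} (hwx : G.Adj w x) (hi : i ≠ c w)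
    (hiN : ∀ y, G.Adj w y → c y ≠ i) (hW : witnessSet G c x = {c w, i}) :
    isCritical G c x := by
  have hodd : Odd (nbrColorCount G c x i) := by
    change i ∈ witnessSet G c x
    simp [hW]
  obtain ⟨⟨b, hxb, hb⟩⟩ := (Nat.card_pos_iff.1 hodd.pos).1
  refine ⟨w, b, hwx.symm, hxb, fun hwb => hiN b hwb hb, hb ▸ hi.symm, hb ▸ hW⟩

lemma ClawFree.eq_of_not_adj (hG : ClawFree G) {w v x y : V} (hv : G.Adj w v)
    (hx : G.Adj w x) (hy : G.Adj w y) (hvx : v ≠ x ∧ ¬ G.Adj v x) (hvy : v ≠ y ∧ ¬ G.Adj v y)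
    (hxy : ¬ G.Adj x y) : x = y := by
  by_contra hne
  rcases hG w v x y hv hx hy hvx.1 hvy.1 hne with h | h | h
  exacts [hvx.2 h, hvy.2 h, hxy h]

lemma card_le_card_nbrColors_of_pairWitness [Fintype V] [DecidableRel G.Adj] [DecidableEq α]
    (hG : ClawFree G) (hc : properColoring G c) {v w : V} (hvw : G.Adj v w)
    (hv : ∀ x, (x = v ∨ G.Adj v x) → ¬ isCritical G c x) (S : Finset α)
    (hS : ∀ i ∈ S, i ∉ insert (c w) ((G.neighborFinset w).image c) ∧
      ∃ x, G.Adj w x ∧ witnessSet G c x = {c w, i}) :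
    #S ≤ #((G.neighborFinset w).image c) := by
  have : Nonempty V := ⟨w⟩
  choose! x hwx hWx using fun i hi => (hS i hi).2
  have hnew : ∀ i ∈ S, i ≠ c w ∧ ∀ y, G.Adj w y → c y ≠ i := fun i hi => by
    simpa [not_or, SimpleGraph.mem_neighborFinset] using (hS i hi).1
  have hfar : ∀ i ∈ S, v ≠ x i ∧ ¬ G.Adj v (x i) := fun i hi => by
    have hcrit := isCritical_of_witnessSet_eq_pair (hwx i hi) (hnew i hi).1 (hnew i hi).2
      (hWx i hi)
    exact ⟨fun h => hv _ (Or.inl h.symm) hcrit, fun h => hv _ (Or.inr h) hcrit⟩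
  refine card_le_card_of_injOn (fun i => c (x i))
    (fun i hi => mem_image_of_mem c ((G.mem_neighborFinset _ _).2 (hwx i hi))) ?_
  intro i hi j hj hij
  have hxij : x i = x j :=
    hG.eq_of_not_adj hvw.symm (hwx i hi) (hwx j hj) (hfar i hi) (hfar j hj) fun h => hc h hij
  have hpair := (hWx i hi).symm.trans (hxij ▸ hWx j hj)
  rcases Set.pair_eq_pair_iff.1 hpair with ⟨-, h⟩ | ⟨h, -⟩
  exacts [h, absurd h.symm (hnew j hj).1]

end

theorem stmt_19_general {V : Type*} [Fintype V] (G : SimpleGraph V)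
    [DecidableRel G.Adj] (hclaw : ClawFree G)
    (c : V → Fin (G.maxDegree + 6)) (hc : properColoring G c)
    (v : V) (hv : ∀ x, (x = v ∨ G.Adj v x) → ¬ isCritical G c x)
    (w : V) (hw : G.Adj v w) (hWsmall : (witnessSet G c w).ncard ≤ 4) :
    ∃ i : Fin (G.maxDegree + 6), isSafe G c w i := by
  classical
  set A := insert (c w) ((G.neighborFinset w).image c)
  set S : Finset (Fin (G.maxDegree + 6)) :=
    {i | i ∉ A ∧ ∃ x, G.Adj w x ∧ witnessSet G c x = {c w, i}}
  have hS : #S ≤ #((G.neighborFinset w).image c) :=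
    card_le_card_nbrColors_of_pairWitness hclaw hc hw hv S fun i hi => (mem_filter.1 hi).2
  have hcard : #(A ∪ S) < #(univ : Finset (Fin (G.maxDegree + 6))) := by
    have hI := two_mul_card_nbrColors_le G c w
    have hdeg := G.degree_le_maxDegree w
    have hA : #A ≤ #((G.neighborFinset w).image c) + 1 := card_insert_le _ _
    rw [card_univ, Fintype.card_fin]
    grw [card_union_le]
    omega
  obtain ⟨i, -, hi⟩ := exists_mem_notMem_of_card_lt_card hcard
  simp only [A, S, mem_union, mem_filter, mem_univ, true_and, mem_insert, mem_image,
    SimpleGraph.mem_neighborFinset, not_or, not_exists, not_and] at hi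
  exact ⟨i, hi.1.1, hi.1.2, hi.2 hi.1⟩

theorem stmt_19 {V : Type*} [Fintype V] [DecidableEq V] (G : SimpleGraph V)
    [DecidableRel G.Adj] (hclaw : ClawFree G)
    (c : V → Fin (G.maxDegree + 6)) (hc : properColoring G c)
    (v : V) (hv : ∀ x, (x = v ∨ G.Adj v x) → ¬ isCritical G c x)
    (w : V) (hw : G.Adj v w) (hWsmall : (witnessSet G c w).ncard ≤ 4) :
    ∃ i : Fin (G.maxDegree + 6), isSafe G c w i :=
  stmt_19_general G hclaw c hc v hv w hw hWsmall
end
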